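/- arXiv:2207.03600 — 10 statements merged into one kernel-verified Lean document; each statement's English description precedes it below -/
import Mathlib

section
/- For every finite set of points x_1 ≤ x_2 ≤ … ≤ x_n on the real line (with the Euclidean distance d(x,y)=|x−y|) and every integer k with 1 ≤ k ≤ n, there exists an IP-stable k-clustering of {x_1,…,x_n}; moreover, such a clustering can be chosen so that every cluster is contiguous, i.e., each cluster is a set of consecutive points {x_a, x_{a+1}, …, x_b}. -/
open Finset

/-- A point `x` is IP-stable in the clustering `C` (w.r.t. dissimilarity `d`):
for the cluster containing `x`, either it is the singleton `{x}`, or the average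
distance of `x` to its own cluster (itself excluded) is at most its average
distance to every other cluster. -/
def IPStablePt {α : Type*} [DecidableEq α] (d : α → α → ℝ) {k : ℕ}
    (C : Fin k → Finset α) (x : α) : Prop :=
  ∀ i : Fin k, x ∈ C i →
    (C i = {x} ∨
      ∀ j : Fin k, C j ≠ C i →
        (∑ y ∈ C i, d x y) / ((C i).card - 1 : ℝ) ≤
          (∑ y ∈ C j, d x y) / ((C j).card : ℝ))

/-- `C` is a `k`-clustering of the finite set `D`: a partition of `D` into `k`
nonempty clusters. -/
def IsClustering {α : Type*} [DecidableEq α] (D : Finset α) {k : ℕ}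
    (C : Fin k → Finset α) : Prop :=
  (∀ i, (C i).Nonempty) ∧ (∀ i j, i ≠ j → Disjoint (C i) (C j)) ∧
    Finset.univ.biUnion C = D

/-!
Sort the points and cut them into `k` consecutive blocks. On a line it suffices that the two
extreme points of every block are stable towards the adjacent blocks: the average distance from
a point `x` of a block to the rest of the block exceeds that from the block's last point `p` by
at most `p - x` (triangle inequality), while the average distance from `x` to any block further
right is that block's mean minus `x`, and block means increase from left to right.

Such blocks are found by a shifting process. Start with `k - 1` singletons followed by one block
of the remaining points; all last points are then stable. As long as the first point `q` of some
block prefers the preceding block, move it there. Then `q` becomes a stable last point, the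
preceding block's mean grows, and removing `q` brings the rest of its old block closer, on
average, to that block's last point; so all last points stay stable, while
`∑ i, i * |block i|` drops by one.
-/

namespace LineClustering

noncomputable def mean (l : List ℝ) : ℝ := l.sum / l.length

lemma cast_length_pos {l : List ℝ} (hl : l ≠ []) : (0 : ℝ) < l.length := by
  exact_mod_cast List.length_pos_iff.mpr hl

lemma sum_eq_length_mul_mean {l : List ℝ} (hl : l ≠ []) : l.sum = l.length * mean l := by
  rw [mean, mul_div_cancel₀ _ (cast_length_pos hl).ne']

lemma mean_le_of_forall_le {l : List ℝ} {a : ℝ} (hl : l ≠ []) (h : ∀ y ∈ l, y ≤ a) :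
    mean l ≤ a := by
  rw [mean, div_le_iff₀ (cast_length_pos hl), mul_comm, ← nsmul_eq_mul]
  exact l.sum_le_card_nsmul a h

lemma le_mean_of_forall_le {l : List ℝ} {a : ℝ} (hl : l ≠ []) (h : ∀ y ∈ l, a ≤ y) :
    a ≤ mean l := by
  rw [mean, le_div_iff₀ (cast_length_pos hl), mul_comm, ← nsmul_eq_mul]
  exact l.card_nsmul_le_sum a h

lemma mean_le_mean {l m : List ℝ} (hl : l ≠ []) (hm : m ≠ [])
    (h : ∀ a ∈ l, ∀ b ∈ m, a ≤ b) : mean l ≤ mean m :=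
  le_mean_of_forall_le hm fun b hb => mean_le_of_forall_le hl fun a ha => h a ha b hb

lemma mean_append {l m : List ℝ} (hl : l ≠ []) (hm : m ≠ []) :
    mean (l ++ m) = (l.length * mean l + m.length * mean m) / (l.length + m.length) := by
  have := cast_length_pos hl
  have := cast_length_pos hm
  simp only [mean, List.sum_append, List.length_append, Nat.cast_add]
  field_simp

lemma mean_append_le {l m : List ℝ} (hl : l ≠ []) (hm : m ≠ []) (h : mean l ≤ mean m) :
    mean (l ++ m) ≤ mean m := by
  have := cast_length_pos hl
  have := cast_length_pos hm
  rw [mean_append hl hm, div_le_iff₀ (by positivity)]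
  nlinarith

lemma le_mean_append {l m : List ℝ} (hl : l ≠ []) (hm : m ≠ []) (h : mean l ≤ mean m) :
    mean l ≤ mean (l ++ m) := by
  have := cast_length_pos hl
  have := cast_length_pos hm
  rw [mean_append hl hm, le_div_iff₀ (by positivity)]
  nlinarith

lemma sum_map_dist_le_of_mem {α : Type*} [PseudoMetricSpace α] {l : List α} {x : α}
    (hx : x ∈ l) (p : α) :
    (l.map fun y => dist x y).sum ≤ (l.map fun y => dist p y).sum + (l.length - 1) * dist x p := by
  classical
  have hperm := List.perm_cons_erase hx
  have htri : ((l.erase x).map fun y => dist x y).sum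
      ≤ ((l.erase x).map fun y => dist p y + dist x p).sum :=
    List.sum_le_sum fun y _ => (dist_triangle x p y).trans_eq (add_comm _ _)
  rw [(hperm.map _).sum_eq, (hperm.map _).sum_eq, hperm.length_eq]
  simp only [List.sum_map_add, List.map_const', List.sum_replicate, nsmul_eq_mul] at htri
  simp only [List.map_cons, List.sum_cons, dist_self, List.length_cons, Nat.cast_succ]
  linarith [dist_nonneg (x := p) (y := x)]

lemma sum_map_abs_sub_of_le {l : List ℝ} {x : ℝ} (h : ∀ y ∈ l, x ≤ y) :
    (l.map fun y => |x - y|).sum = l.sum - l.length * x := by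
  induction l with
  | nil => simp
  | cons a l ih =>
    simp only [List.mem_cons, forall_eq_or_imp] at h
    simp only [List.map_cons, List.sum_cons, ih h.2, List.length_cons, Nat.cast_succ,
      abs_of_nonpos (sub_nonpos.mpr h.1)]
    ring

lemma sum_map_abs_sub_of_ge {l : List ℝ} {x : ℝ} (h : ∀ y ∈ l, y ≤ x) :
    (l.map fun y => |x - y|).sum = l.length * x - l.sum := by
  induction l with
  | nil => simp
  | cons a l ih =>
    simp only [List.mem_cons, forall_eq_or_imp] at h
    simp only [List.map_cons, List.sum_cons, ih h.2, List.length_cons, Nat.cast_succ,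
      abs_of_nonneg (sub_nonneg.mpr h.1)]
    ring

/-- When `B ++ [p]` and `C` are consecutive blocks of a sorted list, `p - mean B` and
`mean C - p` are the average distances from `p` to the rest of its block and to `C`;
so `LastStable` is IP-stability of the last point of a block towards the next block, and
`HeadStable` that of the first point of a block towards the previous one. -/
def LastStable (B C : List ℝ) : Prop :=
  ∀ B' p, B = B' ++ [p] → B' ≠ [] → p - mean B' ≤ mean C - p

def HeadStable (B C : List ℝ) : Prop :=
  ∀ q C', C = q :: C' → C' ≠ [] → mean C' - q ≤ q - mean B

lemma avg_dist_le_of_lastStable {B G : List ℝ} {p x μ : ℝ} (hB : B ≠ [])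
    (hBp : ∀ y ∈ B, y ≤ p) (hx : x ∈ B ++ [p]) (hstable : p - mean B ≤ μ - p)
    (hμ : μ ≤ mean G) (hG : G ≠ []) (hxG : ∀ y ∈ G, x ≤ y) :
    ((B ++ [p]).map fun y => |x - y|).sum / ((B ++ [p]).length - 1 : ℝ)
      ≤ (G.map fun y => |x - y|).sum / G.length := by
  have hn := cast_length_pos hB
  have hlen : ((B ++ [p]).length - 1 : ℝ) = B.length := by simp
  have hxp : x ≤ p := by simpa using (List.forall_mem_append.mpr ⟨hBp, by simp⟩) x hx
  have htri := sum_map_dist_le_of_mem hx p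
  simp only [Real.dist_eq, hlen] at htri
  rw [sum_map_abs_sub_of_ge (List.forall_mem_append.mpr ⟨hBp, by simp⟩), abs_of_nonpos
    (sub_nonpos.mpr hxp)] at htri
  rw [sum_map_abs_sub_of_le hxG, hlen, div_le_div_iff₀ hn (cast_length_pos hG)]
  simp only [List.sum_append, List.sum_singleton, List.length_append, List.length_singleton,
    Nat.cast_add, Nat.cast_one] at htri
  have hS : ((B ++ [p]).map fun y => |x - y|).sum ≤ B.length * (mean G - x) := by
    rw [sum_eq_length_mul_mean hB] at htri
    nlinarith
  rw [sum_eq_length_mul_mean hG]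
  nlinarith [cast_length_pos hG]

lemma avg_dist_le_of_headStable {C G : List ℝ} {q x μ : ℝ} (hC : C ≠ [])
    (hqC : ∀ y ∈ C, q ≤ y) (hx : x ∈ q :: C) (hstable : mean C - q ≤ q - μ)
    (hμ : mean G ≤ μ) (hG : G ≠ []) (hxG : ∀ y ∈ G, y ≤ x) :
    ((q :: C).map fun y => |x - y|).sum / ((q :: C).length - 1 : ℝ)
      ≤ (G.map fun y => |x - y|).sum / G.length := by
  have hn := cast_length_pos hC
  have hlen : ((q :: C).length - 1 : ℝ) = C.length := by simp
  have hqx : q ≤ x := by simpa using (List.forall_mem_cons.mpr ⟨le_rfl, hqC⟩) x hx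
  have htri := sum_map_dist_le_of_mem hx q
  simp only [Real.dist_eq, hlen] at htri
  rw [sum_map_abs_sub_of_le (List.forall_mem_cons.mpr ⟨le_rfl, hqC⟩), abs_of_nonneg
    (sub_nonneg.mpr hqx)] at htri
  rw [sum_map_abs_sub_of_ge hxG, hlen, div_le_div_iff₀ hn (cast_length_pos hG)]
  simp only [List.sum_cons, List.length_cons, Nat.cast_add, Nat.cast_one] at htri
  have hS : ((q :: C).map fun y => |x - y|).sum ≤ C.length * (x - mean G) := by
    rw [sum_eq_length_mul_mean hC] at htri
    nlinarith
  rw [sum_eq_length_mul_mean hG]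
  nlinarith [cast_length_pos hG]

theorem avg_dist_le_of_isChain {Q : List (List ℝ)} (hQ : Q.flatten.Pairwise (· ≤ ·))
    (hne : ∀ B ∈ Q, B ≠ []) (hR : Q.IsChain LastStable) (hL : Q.IsChain HeadStable)
    {B G : List ℝ} (hB : B ∈ Q) (hG : G ∈ Q) (hGB : G ≠ B) {x : ℝ} (hx : x ∈ B)
    (hB2 : 2 ≤ B.length) :
    (B.map fun y => |x - y|).sum / (B.length - 1 : ℝ)
      ≤ (G.map fun y => |x - y|).sum / G.length := by
  obtain ⟨L, R, rfl⟩ := List.append_of_mem hB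
  have hBsort := (List.pairwise_flatten.mp hQ).1 B hB
  obtain ⟨hsepL, hsepBR, hsepLB⟩ := List.pairwise_append.mp (List.pairwise_flatten.mp hQ).2
  obtain ⟨hsepB, hsepR⟩ := List.pairwise_cons.mp hsepBR
  rcases List.mem_append.mp hG with hGL | hGBR
  · obtain ⟨L', L₁, rfl⟩ := L.eq_nil_or_concat'.resolve_left (List.ne_nil_of_mem hGL)
    obtain ⟨q, C, rfl⟩ := List.exists_cons_of_ne_nil (hne _ hB)
    have hC : C ≠ [] := by rintro rfl; simp at hB2
    rw [List.append_assoc, List.singleton_append, List.isChain_append_cons_cons] at hL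
    have hμ : mean G ≤ mean L₁ := by
      rcases List.mem_append.mp hGL with hG' | hG'
      · exact mean_le_mean (hne G hG) (hne L₁ (by simp))
          ((List.pairwise_append.mp hsepL).2.2 G hG' L₁ (List.mem_singleton_self _))
      · rw [List.mem_singleton.mp hG']
    exact avg_dist_le_of_headStable hC (List.pairwise_cons.mp hBsort).1 hx
      (hL.2.1 q C rfl hC) hμ (hne G hG) fun y hy => hsepLB G hGL _ List.mem_cons_self y hy x hx
  · have hGR : G ∈ R := (List.mem_cons.mp hGBR).resolve_left hGB
    obtain ⟨R₁, R', rfl⟩ := List.exists_cons_of_ne_nil (List.ne_nil_of_mem hGR)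
    obtain ⟨B', p, rfl⟩ := List.eq_nil_or_concat' _ |>.resolve_left (hne _ hB)
    have hB' : B' ≠ [] := by rintro rfl; simp at hB2
    rw [List.isChain_append_cons_cons] at hR
    have hμ : mean R₁ ≤ mean G := by
      rcases List.mem_cons.mp hGR with rfl | hG'
      · exact le_rfl
      · exact mean_le_mean (hne R₁ (by simp)) (hne G hG) ((List.pairwise_cons.mp hsepR).1 G hG')
    exact avg_dist_le_of_lastStable hB'
      (fun y hy => (List.pairwise_append.mp hBsort).2.2 y hy p (List.mem_singleton_self _)) hx
      (hR.2.1 B' p rfl hB') hμ (hne G hG) (hsepB G hGR x hx)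

/-- `∑ i, i * (P i).length`, which drops by one when a point moves to the preceding block. -/
def indexWeight : List (List ℝ) → ℕ
  | [] => 0
  | _ :: P => P.flatten.length + indexWeight P

lemma indexWeight_append (L M : List (List ℝ)) :
    indexWeight (L ++ M) = indexWeight L + indexWeight M + L.length * M.flatten.length := by
  induction L with
  | nil => simp [indexWeight]
  | cons B L ih => simp only [List.cons_append, indexWeight, ih, List.flatten_append,
      List.length_append, List.length_cons]; ring

lemma lastStable_singleton (p : ℝ) (C : List ℝ) : LastStable [p] C := by
  intro B' p' h hB'
  exact absurd (List.length_eq_zero_iff.mp (by simpa using congrArg List.length h)) hB'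

lemma lastStable_concat {B C : List ℝ} {q : ℝ} (h : q - mean B ≤ mean C - q) :
    LastStable (B ++ [q]) C := by
  intro B' p heq _
  obtain ⟨rfl, hpq⟩ := List.append_inj' heq rfl
  rwa [← List.singleton_inj.mp hpq]

lemma LastStable.concat_right {X C : List ℝ} {q : ℝ} (h : LastStable X C) (hC : C ≠ [])
    (hq : ∀ y ∈ C, y ≤ q) : LastStable X (C ++ [q]) := fun B' p hX hB' =>
  (h B' p hX hB').trans (sub_le_sub_right
    (le_mean_append hC (List.cons_ne_nil _ _) (by simpa [mean] using mean_le_of_forall_le hC hq)) p)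

lemma LastStable.of_cons {q : ℝ} {C Y : List ℝ} (h : LastStable (q :: C) Y)
    (hq : ∀ y ∈ C, q ≤ y) : LastStable C Y := by
  intro B' p hC hB'
  have hqB' : mean [q] ≤ mean B' := by
    simpa [mean] using le_mean_of_forall_le hB' fun y hy => hq y (hC ▸ List.mem_append_left _ hy)
  have hmean := mean_append_le (List.cons_ne_nil _ _) hB' hqB'
  rw [List.singleton_append] at hmean
  linarith [h (q :: B') p (by rw [hC, List.cons_append]) (List.cons_ne_nil _ _)]

lemma exists_shift {P : List (List ℝ)} (hne : ∀ B ∈ P, B ≠ [])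
    (hsort : P.flatten.Pairwise (· ≤ ·)) (hR : P.IsChain LastStable)
    (hL : ¬ P.IsChain HeadStable) :
    ∃ Q : List (List ℝ), Q.flatten = P.flatten ∧ Q.length = P.length ∧ (∀ B ∈ Q, B ≠ []) ∧
      Q.IsChain LastStable ∧ indexWeight Q < indexWeight P := by
  obtain ⟨B, C, L, R, rfl, hBC⟩ : ∃ B C L R, P = L ++ B :: C :: R ∧ ¬ HeadStable B C := by
    simpa [List.isChain_iff_forall_rel_of_append_cons_cons] using hL
  simp only [HeadStable, not_forall, not_le] at hBC
  obtain ⟨q, C', rfl, hC', hmove⟩ := hBC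
  have hBne : B ≠ [] := hne B (by simp)
  obtain ⟨-, hsep, -⟩ := List.pairwise_append.mp (List.pairwise_flatten.mp hsort).2
  obtain ⟨hBC, -⟩ := List.pairwise_cons.mp hsep
  have hBq : ∀ y ∈ B, y ≤ q := fun y hy => hBC _ List.mem_cons_self y hy q List.mem_cons_self
  have hqC' : ∀ y ∈ C', q ≤ y := fun y hy =>
    List.rel_of_pairwise_cons ((List.pairwise_flatten.mp hsort).1 _ (by simp)) hy
  obtain ⟨hRLB, -, hRC⟩ := List.isChain_append_cons_cons.mp hR
  obtain ⟨hRhead, hRtail⟩ := List.isChain_cons.mp hRC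
  refine ⟨L ++ (B ++ [q]) :: C' :: R, by simp, by simp, ?_, ?_, ?_⟩
  · intro X hX
    simp only [List.mem_append, List.mem_cons] at hX
    rcases hX with hX | rfl | rfl | hX
    · exact hne X (by simp [hX])
    · simp
    · exact hC'
    · exact hne X (by simp [hX])
  · refine List.isChain_append_cons_cons.mpr ⟨?_, lastStable_concat hmove.le,
      List.isChain_cons.mpr ⟨fun Y hY => (hRhead Y hY).of_cons hqC', hRtail⟩⟩
    obtain ⟨hRL, -, hRLB⟩ := List.isChain_append.mp hRLB
    refine List.isChain_append.mpr ⟨hRL, List.isChain_singleton _, fun X hX Y hY => ?_⟩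
    obtain rfl : Y = B ++ [q] := by simpa using hY.symm
    exact (hRLB X hX B (by simp)).concat_right hBne hBq
  · simp only [indexWeight_append, indexWeight, List.flatten_cons, List.length_append,
      List.length_cons, List.length_nil]
    ring_nf
    omega

theorem exists_isChain_of_lastStable (P : List (List ℝ)) (hne : ∀ B ∈ P, B ≠ [])
    (hsort : P.flatten.Pairwise (· ≤ ·)) (hR : P.IsChain LastStable) :
    ∃ Q : List (List ℝ), Q.flatten = P.flatten ∧ Q.length = P.length ∧ (∀ B ∈ Q, B ≠ []) ∧
      Q.IsChain LastStable ∧ Q.IsChain HeadStable := by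
  by_cases hL : P.IsChain HeadStable
  · exact ⟨P, rfl, rfl, hne, hR, hL⟩
  obtain ⟨Q, hflat, hlen, hneQ, hRQ, hlt⟩ := exists_shift hne hsort hR hL
  obtain ⟨Q', hflat', hlen', hQ'⟩ := exists_isChain_of_lastStable Q hneQ (hflat ▸ hsort) hRQ
  exact ⟨Q', hflat'.trans hflat, hlen'.trans hlen, hQ'⟩
termination_by indexWeight P

theorem exists_stable_blocks {s : List ℝ} (hs : s.Pairwise (· ≤ ·)) {k : ℕ} (hk : 1 ≤ k)
    (hks : k ≤ s.length) :
    ∃ Q : List (List ℝ), Q.flatten = s ∧ Q.length = k ∧ (∀ B ∈ Q, B ≠ []) ∧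
      Q.IsChain LastStable ∧ Q.IsChain HeadStable := by
  set P := (s.take (k - 1)).map (fun x => [x]) ++ [s.drop (k - 1)]
  have hflat : P.flatten = s := by
    have hsingletons (l : List ℝ) : (l.map fun x => [x]).flatten = l := by
      induction l <;> simp_all
    simp only [P, List.flatten_append, hsingletons, List.flatten_singleton, List.take_append_drop]
  have hne : ∀ B ∈ P, B ≠ [] := by
    simp only [P, List.mem_append, List.mem_map, List.mem_singleton]
    rintro B (⟨x, -, rfl⟩ | rfl)
    · exact List.cons_ne_nil _ _
    · rw [← List.length_pos_iff, List.length_drop]; omega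
  have hR : P.IsChain LastStable := by
    simp only [P]
    induction s.take (k - 1) with
    | nil => exact List.isChain_singleton _
    | cons a l ih => exact ih.cons fun C _ => lastStable_singleton a C
  obtain ⟨Q, hQflat, hQlen, hQ⟩ := exists_isChain_of_lastStable P hne (hflat ▸ hs) hR
  exact ⟨Q, hQflat.trans hflat, by simp [hQlen, P]; omega, hQ⟩

variable {Q : List (List ℝ)}

lemma isClustering_toFinset {D : Finset ℝ} (hD : ∀ x, x ∈ D ↔ x ∈ Q.flatten)
    (hnodup : Q.flatten.Nodup) (hne : ∀ B ∈ Q, B ≠ []) :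
    IsClustering D fun i : Fin Q.length => Q[i].toFinset := by
  refine ⟨fun i => (List.toFinset_nonempty_iff _).mpr (hne _ (List.getElem_mem _)),
    fun i j hij => ?_, ?_⟩
  · have hdisj := List.pairwise_iff_getElem.mp (List.nodup_flatten.mp hnodup).2
    rw [List.disjoint_toFinset_iff_disjoint]
    rcases lt_or_gt_of_ne hij with h | h
    · exact hdisj _ _ _ _ h
    · exact (hdisj _ _ _ _ h).symm
  · ext x
    simp only [Finset.mem_biUnion, Finset.mem_univ, true_and, List.mem_toFinset, hD,
      List.mem_flatten]
    constructor
    · rintro ⟨i, hx⟩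
      exact ⟨_, List.getElem_mem _, hx⟩
    · rintro ⟨_, hB, hx⟩
      obtain ⟨u, hu, rfl⟩ := List.mem_iff_getElem.mp hB
      exact ⟨⟨u, hu⟩, hx⟩

lemma mem_getElem_of_le_of_le (hQ : Q.flatten.Pairwise (· < ·)) (i : Fin Q.length) {a b c : ℝ}
    (ha : a ∈ Q[i]) (hb : b ∈ Q.flatten) (hc : c ∈ Q[i]) (hab : a ≤ b) (hbc : b ≤ c) :
    b ∈ Q[i] := by
  obtain ⟨_, hG, hbG⟩ := List.mem_flatten.mp hb
  obtain ⟨u, hu, rfl⟩ := List.mem_iff_getElem.mp hG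
  have hsep := List.pairwise_iff_getElem.mp (List.pairwise_flatten.mp hQ).2
  rcases lt_trichotomy u i with h | rfl | h
  · exact absurd hab (not_le.mpr (hsep u i hu i.isLt h b hbG a ha))
  · exact hbG
  · exact absurd hbc (not_le.mpr (hsep i u i.isLt hu h c hc b hbG))

lemma ipStablePt_toFinset (hQ : Q.flatten.Pairwise (· < ·)) (hne : ∀ B ∈ Q, B ≠ [])
    (hR : Q.IsChain LastStable) (hL : Q.IsChain HeadStable) (x : ℝ) :
    IPStablePt (fun a b => |a - b|) (fun i : Fin Q.length => Q[i].toFinset) x := by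
  have hnodup (i : Fin Q.length) : Q[i].Nodup :=
    ((List.pairwise_flatten.mp hQ).1 _ (List.getElem_mem _)).nodup
  intro i hx
  rw [List.mem_toFinset] at hx
  by_cases h1 : Q[i].length = 1
  · obtain ⟨y, hy⟩ := List.length_eq_one_iff.mp h1
    rw [hy, List.mem_singleton] at hx
    left
    simp [hy, hx]
  · right
    intro j hji
    have hB2 : 2 ≤ Q[i].length := by
      have : 0 < Q[i].length := List.length_pos_iff.mpr (hne _ (List.getElem_mem _))
      omega
    simp only [List.sum_toFinset _ (hnodup _), List.toFinset_card_of_nodup (hnodup _)]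
    exact avg_dist_le_of_isChain (hQ.imp le_of_lt) hne hR hL (List.getElem_mem _)
      (List.getElem_mem _) (fun h => hji (congrArg List.toFinset h)) hx hB2

end LineClustering

open LineClustering

/-- every finite set of points on the real line admits, for every
`1 ≤ k ≤ n`, an IP-stable `k`-clustering all of whose clusters are contiguous. -/
theorem ip_stable_clustering_exists_on_line
    (D : Finset ℝ) (k : ℕ) (hk1 : 1 ≤ k) (hkn : k ≤ D.card) :
    ∃ C : Fin k → Finset ℝ,
      IsClustering D C ∧
      (∀ x ∈ D, IPStablePt (fun a b => |a - b|) C x) ∧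
      (∀ i : Fin k, ∀ a ∈ C i, ∀ b ∈ D, ∀ c ∈ C i, a ≤ b → b ≤ c → b ∈ C i) := by
  obtain ⟨Q, hflat, rfl, hne, hR, hL⟩ := exists_stable_blocks
    (D.pairwise_sort (· ≤ ·)) hk1 (by rwa [Finset.length_sort])
  have hsort : Q.flatten.Pairwise (· < ·) := hflat ▸ D.sortedLT_sort.pairwise
  have hD (x : ℝ) : x ∈ D ↔ x ∈ Q.flatten := by simp [hflat]
  refine ⟨fun i => Q[i].toFinset, isClustering_toFinset hD hsort.nodup hne,
    fun x _ => ipStablePt_toFinset hsort hne hR hL x,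
    fun i a ha b hb c hc hab hbc => ?_⟩
  simp only [List.mem_toFinset] at ha hc ⊢
  exact mem_getElem_of_le_of_le hsort i ha ((hD b).mp hb) hc hab hbc
end

section
/- Let x_1 ≤ x_2 ≤ … ≤ x_n be points on the real line with Euclidean distance, and let C=(C_1,…,C_k) be a k-clustering with contiguous clusters C_1={x_1,…,x_{i_1}}, C_2={x_{i_1+1},…,x_{i_2}}, …, C_k={x_{i_{k−1}+1},…,x_n} for some 1 ≤ i_1 < … < i_{k−1} < n. Then C is IP-stable if and only if all boundary points x_{i_l} and x_{i_l+1} for l∈{1,…,k−1} are IP-stable. -/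
open Finset

/-!
Let `p` lie in a cluster `A` and `B` be another cluster. On the line, `B` lies entirely on one
side of `A`, so the boundary point `q` of `A` facing `B` lies between `p` and every point of `B`.
Moving from `q` to `p` then raises the average distance to `B` by exactly `δ = |p - q|`, while
by the triangle inequality it raises the average distance to the other points of `A` by at
most `δ`. Hence the IP-stability inequality for `q` with respect to `B` implies the one for `p`.
-/

theorem sum_dist_div_le_of_dist_add_dist_eq {α E : Type*} [DecidableEq α] [PseudoMetricSpace E]
    (f : α → E) {A B : Finset α} {p q : α} (hp : p ∈ A) (hA : 1 < #A) (hB : B.Nonempty)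
    (hpqB : ∀ y ∈ B, dist (f p) (f q) + dist (f q) (f y) = dist (f p) (f y))
    (hq : (∑ y ∈ A, dist (f q) (f y)) / (#A - 1 : ℝ) ≤ (∑ y ∈ B, dist (f q) (f y)) / #B) :
    (∑ y ∈ A, dist (f p) (f y)) / (#A - 1 : ℝ) ≤ (∑ y ∈ B, dist (f p) (f y)) / #B := by
  set δ := dist (f p) (f q)
  have hm : (0 : ℝ) < #A - 1 := by
    rw [sub_pos, Nat.one_lt_cast]
    exact hA
  have hBpos : (0 : ℝ) < #B := Nat.cast_pos.mpr hB.card_pos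
  have hsumA : ∑ y ∈ A, dist (f p) (f y) ≤ (#A - 1 : ℝ) * δ + ∑ y ∈ A, dist (f q) (f y) :=
    calc ∑ y ∈ A, dist (f p) (f y)
        = ∑ y ∈ A.erase p, dist (f p) (f y) := (sum_erase A (dist_self (f p))).symm
      _ ≤ ∑ y ∈ A.erase p, (δ + dist (f q) (f y)) :=
          sum_le_sum fun y _ => dist_triangle _ _ _
      _ = (#A - 1 : ℝ) * δ + ∑ y ∈ A.erase p, dist (f q) (f y) := by
          rw [sum_add_distrib, sum_const, nsmul_eq_mul, card_erase_of_mem hp,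
            Nat.cast_sub hA.le, Nat.cast_one]
      _ ≤ (#A - 1 : ℝ) * δ + ∑ y ∈ A, dist (f q) (f y) := add_le_add_right
          (sum_le_sum_of_subset_of_nonneg (erase_subset _ _) fun _ _ _ => dist_nonneg) _
  calc (∑ y ∈ A, dist (f p) (f y)) / (#A - 1 : ℝ)
      ≤ ((#A - 1 : ℝ) * δ + ∑ y ∈ A, dist (f q) (f y)) / (#A - 1 : ℝ) := by gcongr
    _ = δ + (∑ y ∈ A, dist (f q) (f y)) / (#A - 1 : ℝ) := by field_simp
    _ ≤ δ + (∑ y ∈ B, dist (f q) (f y)) / #B := by gcongr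
    _ = (∑ y ∈ B, dist (f p) (f y)) / #B := by
      rw [← sum_congr rfl hpqB, sum_add_distrib, sum_const, nsmul_eq_mul]
      field_simp

theorem Monotone.dist_add_dist_eq_of_mem_uIcc {ι : Type*} [LinearOrder ι] {x : ι → ℝ}
    (hx : Monotone x) {p q y : ι} (hq : q ∈ Set.uIcc p y) :
    dist (x p) (x q) + dist (x q) (x y) = dist (x p) (x y) :=
  dist_add_dist_of_mem_segment (by rw [segment_eq_uIcc]; exact hx.mapsTo_uIcc hq)

namespace ContiguousClusters

variable {n k : ℕ} {b : Fin (k + 1) → ℕ} {C : Fin k → Finset (Fin n)}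
  (hC : ∀ (l : Fin k) (p : Fin n), p ∈ C l ↔ b l.castSucc ≤ (p : ℕ) ∧ (p : ℕ) < b l.succ)
include hC

theorem lt_of_mem_of_mem_of_lt (hb : Monotone b) {i j : Fin k} (hij : i < j) {p q : Fin n}
    (hp : p ∈ C i) (hq : q ∈ C j) : p < q := by
  have hij' : b i.succ ≤ b j.castSucc := hb (Fin.succ_le_castSucc_iff.mpr hij)
  have := (hC i p).mp hp
  have := (hC j q).mp hq
  rw [Fin.lt_def]
  omega

variable (hb : StrictMono b) (hbn : b (Fin.last k) = n)
include hb hbn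

theorem exists_mem_val_eq_left (i : Fin k) : ∃ q ∈ C i, (q : ℕ) = b i.castSucc := by
  have hlt : b i.castSucc < b i.succ := hb Fin.castSucc_lt_succ
  have hle : b i.succ ≤ n := hbn ▸ hb.monotone (Fin.le_last _)
  exact ⟨⟨b i.castSucc, by omega⟩, (hC i _).mpr ⟨le_rfl, hlt⟩, rfl⟩

theorem exists_mem_val_eq_right (i : Fin k) : ∃ q ∈ C i, (q : ℕ) = b i.succ - 1 := by
  have hlt : b i.castSucc < b i.succ := hb Fin.castSucc_lt_succ
  have hle : b i.succ ≤ n := hbn ▸ hb.monotone (Fin.le_last _)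
  exact ⟨⟨b i.succ - 1, by omega⟩, (hC i _).mpr ⟨by simp only; omega, by simp only; omega⟩, rfl⟩

theorem exists_boundary_mem_between {i j : Fin k} (hji : j ≠ i) {p : Fin n} (hp : p ∈ C i) :
    ∃ l : Fin (k + 1), 0 < (l : ℕ) ∧ (l : ℕ) < k ∧
      ∃ q ∈ C i, ((q : ℕ) = b l - 1 ∨ (q : ℕ) = b l) ∧ ∀ y ∈ C j, q ∈ Set.uIcc p y := by
  have hpC := (hC i p).mp hp
  rcases hji.lt_or_gt with hlt | hgt
  · obtain ⟨q, hq, hqb⟩ := exists_mem_val_eq_left hC hb hbn i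
    refine ⟨i.castSucc, by simp; omega, by simp, q, hq, Or.inr hqb, fun y hy => ?_⟩
    have hyq := lt_of_mem_of_mem_of_lt hC hb.monotone hlt hy hq
    exact Set.mem_uIcc.mpr (Or.inr ⟨hyq.le, Fin.le_def.mpr (by omega)⟩)
  · obtain ⟨q, hq, hqb⟩ := exists_mem_val_eq_right hC hb hbn i
    refine ⟨i.succ, by simp, by simp; omega, q, hq, Or.inl hqb, fun y hy => ?_⟩
    have hqy := lt_of_mem_of_mem_of_lt hC hb.monotone hgt hq hy
    exact Set.mem_uIcc.mpr (Or.inl ⟨Fin.le_def.mpr (by omega), hqy.le⟩)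

end ContiguousClusters

theorem ip_stable_iff_boundary_points_stable_on_line_general
    (n k : ℕ) (x : Fin n → ℝ) (hx : Monotone x)
    (b : Fin (k + 1) → ℕ) (hb : StrictMono b)
    (hbn : b (Fin.last k) = n)
    (C : Fin k → Finset (Fin n))
    (hC : ∀ (l : Fin k) (p : Fin n),
      p ∈ C l ↔ b l.castSucc ≤ (p : ℕ) ∧ (p : ℕ) < b l.succ) :
    (∀ p : Fin n, IPStablePt (fun p q => |x p - x q|) C p) ↔
      (∀ l : Fin (k + 1), 0 < (l : ℕ) → (l : ℕ) < k →
        ∀ p : Fin n, ((p : ℕ) = b l - 1 ∨ (p : ℕ) = b l) →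
          IPStablePt (fun p q => |x p - x q|) C p) := by
  refine ⟨fun h l _ _ p _ => h p, fun h p i hp => ?_⟩
  by_cases hsingle : #(C i) ≤ 1
  · exact Or.inl <|
      eq_singleton_iff_unique_mem.mpr ⟨hp, fun y hy => card_le_one.mp hsingle y hy p hp⟩
  refine Or.inr fun j hji => ?_
  obtain ⟨l, hl0, hlk, q, hq, hqb, hbetween⟩ :=
    ContiguousClusters.exists_boundary_mem_between hC hb hbn (ne_of_apply_ne C hji) hp
  obtain ⟨y, hy, -⟩ := ContiguousClusters.exists_mem_val_eq_left hC hb hbn j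
  rcases h l hl0 hlk q hqb i hq with hqsingle | hqstable
  · simp [hqsingle] at hsingle
  exact sum_dist_div_le_of_dist_add_dist_eq x hp (not_le.mp hsingle) ⟨y, hy⟩
    (fun y hy => hx.dist_add_dist_eq_of_mem_uIcc (hbetween y hy)) (hqstable j hji)

/-- for sorted points on the line and a clustering into `k`
contiguous clusters (given by boundary positions `b 0 = 0 < b 1 < ⋯ < b k = n`),
the clustering is IP-stable iff all boundary points `x_{b l - 1}` (last point of
a cluster) and `x_{b l}` (first point of the next cluster), for the interior
boundaries `0 < l < k`, are IP-stable. -/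
theorem ip_stable_iff_boundary_points_stable_on_line
    (n k : ℕ) (hk : 1 ≤ k) (x : Fin n → ℝ) (hx : Monotone x)
    (b : Fin (k + 1) → ℕ) (hb : StrictMono b)
    (hb0 : b 0 = 0) (hbn : b (Fin.last k) = n)
    (C : Fin k → Finset (Fin n))
    (hC : ∀ (l : Fin k) (p : Fin n),
      p ∈ C l ↔ b l.castSucc ≤ (p : ℕ) ∧ (p : ℕ) < b l.succ) :
    (∀ p : Fin n, IPStablePt (fun p q => |x p - x q|) C p) ↔
      (∀ l : Fin (k + 1), 0 < (l : ℕ) → (l : ℕ) < k →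
        ∀ p : Fin n, ((p : ℕ) = b l - 1 ∨ (p : ℕ) = b l) →
          IPStablePt (fun p q => |x p - x q|) C p) :=
  ip_stable_iff_boundary_points_stable_on_line_general n k x hx b hb hbn C hC
end

section
/- Let x_1 ≤ x_2 ≤ … ≤ x_n be points on the real line with Euclidean distance, and let C=(C_1,…,C_k) be a k-clustering with contiguous clusters separated at indices i_1 < … < i_{k−1}. Then the right boundary point x_{i_l} of cluster C_l is IP-stable if and only if its average distance to the points of C_l∖{x_{i_l}} is at most its average distance to the points of the adjacent cluster C_{l+1}; symmetrically, the left boundary point x_{i_l+1} of C_{l+1} is IP-stable if and only if its average distance to the points of C_{l+1}∖{x_{i_l+1}} is at most its average distance to the points of C_l. In particular, for boundary points stability with respect to the one adjacent cluster implies stability with respect to all other clusters. -/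
open Finset

lemma avg_le_avg' {α : Type*} (s t : Finset α) (f g : α → ℝ)
    (ht : t.Nonempty) (hg : ∀ j ∈ t, 0 ≤ g j)
    (h : ∀ i ∈ s, ∀ j ∈ t, f i ≤ g j) :
    (∑ i ∈ s, f i) / (s.card : ℝ) ≤ (∑ j ∈ t, g j) / (t.card : ℝ) := by
  rcases s.eq_empty_or_nonempty with hs | hs
  · subst hs
    simp only [Finset.sum_empty, Finset.card_empty, Nat.cast_zero, div_zero]
    exact div_nonneg (Finset.sum_nonneg hg) (Nat.cast_nonneg _)
  · have htc : (0:ℝ) < t.card := by exact_mod_cast ht.card_pos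
    have hsc : (0:ℝ) < s.card := by exact_mod_cast hs.card_pos
    rw [div_le_div_iff₀ hsc htc]
    calc (∑ i ∈ s, f i) * t.card = ∑ i ∈ s, f i * t.card := by rw [Finset.sum_mul]
      _ ≤ ∑ _i ∈ s, (∑ j ∈ t, g j) := by
          refine Finset.sum_le_sum fun i hi => ?_
          have h2 : ∑ _j ∈ t, f i ≤ ∑ j ∈ t, g j :=
            Finset.sum_le_sum fun j hj => h i hi j hj
          simpa [Finset.sum_const, nsmul_eq_mul, mul_comm] using h2
      _ = (∑ j ∈ t, g j) * s.card := by
          simp [Finset.sum_const, nsmul_eq_mul, mul_comm]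

/-- Reduction: to show the `iff` between IP-stability and stability w.r.t. one
designated cluster `c'`, it suffices that stability w.r.t. every other cluster
either follows unconditionally or from stability w.r.t. `c'`. -/
lemma ipstable_iff_aux {α : Type*} [DecidableEq α] {k : ℕ} (C : Fin k → Finset α)
    (p : α) (d : α → α → ℝ) (hd : ∀ q, 0 ≤ d p q) (hdp : d p p = 0)
    (c c' : Fin k) (hp : p ∈ C c) (hponly : ∀ i, p ∈ C i → i = c)
    (hne : C c' ≠ C c)
    (H : ∀ j, C j ≠ C c → j ≠ c' →
      ((∑ y ∈ C c', d p y) / ((C c').card : ℝ) ≤ (∑ y ∈ C j, d p y) / ((C j).card : ℝ) ∨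
       (∑ y ∈ C c, d p y) / ((C c).card - 1 : ℝ) ≤ (∑ y ∈ C j, d p y) / ((C j).card : ℝ))) :
    (IPStablePt d C p ↔
      (∑ y ∈ C c, d p y) / ((C c).card - 1 : ℝ) ≤ (∑ y ∈ C c', d p y) / ((C c').card : ℝ)) := by
  constructor
  · intro h
    rcases h c hp with h1 | h2
    · rw [h1]
      simp only [Finset.sum_singleton, hdp, Finset.card_singleton]
      norm_num
      exact div_nonneg (Finset.sum_nonneg fun j _ => hd j) (Nat.cast_nonneg _)
    · exact h2 c' hne
  · intro hyp i hpi
    have hic := hponly i hpi; subst hic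
    right; intro j hj
    by_cases hjc' : j = c'
    · subst hjc'; exact hyp
    · rcases H j hj hjc' with h1 | h1
      · exact le_trans hyp h1
      · exact h1

/-- for sorted points on the line clustered into contiguous clusters
with boundary positions `b`, a right boundary point (index `b l - 1`, the last
point of cluster `l-1`) is IP-stable iff its average distance to the rest of its
own cluster is at most its average distance to the adjacent cluster `l`;
symmetrically for the left boundary point (index `b l`, first point of cluster
`l`). -/
theorem boundary_point_stable_iff_stable_wrt_adjacent_cluster
    (n k : ℕ) (hk : 1 ≤ k) (x : Fin n → ℝ) (hx : Monotone x)
    (b : Fin (k + 1) → ℕ) (hb : StrictMono b)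
    (hb0 : b 0 = 0) (hbn : b (Fin.last k) = n)
    (C : Fin k → Finset (Fin n))
    (hC : ∀ (l : Fin k) (p : Fin n),
      p ∈ C l ↔ b l.castSucc ≤ (p : ℕ) ∧ (p : ℕ) < b l.succ) :
    ∀ l : Fin (k + 1), ∀ h0 : 0 < (l : ℕ), ∀ hlk : (l : ℕ) < k,
      (∀ p : Fin n, (p : ℕ) = b l - 1 →
        (IPStablePt (fun p q => |x p - x q|) C p ↔
          (∑ y ∈ C ⟨(l : ℕ) - 1, by omega⟩, |x p - x y|) /
              ((C ⟨(l : ℕ) - 1, by omega⟩).card - 1 : ℝ) ≤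
            (∑ y ∈ C ⟨(l : ℕ), hlk⟩, |x p - x y|) /
              ((C ⟨(l : ℕ), hlk⟩).card : ℝ))) ∧
      (∀ p : Fin n, (p : ℕ) = b l →
        (IPStablePt (fun p q => |x p - x q|) C p ↔
          (∑ y ∈ C ⟨(l : ℕ), hlk⟩, |x p - x y|) /
              ((C ⟨(l : ℕ), hlk⟩).card - 1 : ℝ) ≤
            (∑ y ∈ C ⟨(l : ℕ) - 1, by omega⟩, |x p - x y|) /
              ((C ⟨(l : ℕ) - 1, by omega⟩).card : ℝ))) := by
  intro l h0 hlk
  -- cast-friendly monotonicity of b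
  have hble : ∀ u v : Fin (k+1), (u : ℕ) ≤ (v : ℕ) → b u ≤ b v := by
    intro u v h; exact hb.monotone h
  have hblt : ∀ u v : Fin (k+1), (u : ℕ) < (v : ℕ) → b u < b v := by
    intro u v h; exact hb h
  have hbsn : ∀ j : Fin k, b j.succ ≤ n := by
    intro j
    have := hble j.succ (Fin.last k) (by simp [Fin.last])
    omega
  have hbcs : ∀ j : Fin k, b j.castSucc < b j.succ := by
    intro j; exact hblt _ _ (by simp)
  have hnonempty : ∀ j : Fin k, (C j).Nonempty := by
    intro j
    exact ⟨⟨b j.castSucc, lt_of_lt_of_le (hbcs j) (hbsn j)⟩,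
      (hC j _).mpr ⟨le_refl _, hbcs j⟩⟩
  have hponly : ∀ (q : Fin n) (i j : Fin k), q ∈ C i → q ∈ C j → i = j := by
    intro q i j hi hj
    rw [hC] at hi hj
    by_contra hij
    rcases Nat.lt_or_ge (i : ℕ) (j : ℕ) with h | h
    · have := hble i.succ j.castSucc (by simp; omega); omega
    · have hji : (j : ℕ) < (i : ℕ) := by
        rcases Nat.lt_or_ge (j : ℕ) (i : ℕ) with h' | h'
        · exact h'
        · exact absurd (Fin.ext (le_antisymm h' h)) hij
      have := hble j.succ i.castSucc (by simp; omega); omega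
  have hmono : ∀ q r : Fin n, (q : ℕ) ≤ (r : ℕ) → x q ≤ x r := by
    intro q r h; exact hx h
  have habs1 : ∀ q r : Fin n, (q : ℕ) ≤ (r : ℕ) → |x r - x q| = x r - x q := by
    intro q r h; exact abs_of_nonneg (sub_nonneg.mpr (hmono q r h))
  have habs2 : ∀ q r : Fin n, (q : ℕ) ≤ (r : ℕ) → |x q - x r| = x r - x q := by
    intro q r h; rw [abs_sub_comm]; exact habs1 q r h
  set a : Fin k := ⟨(l : ℕ) - 1, by omega⟩ with ha
  set m : Fin k := ⟨(l : ℕ), hlk⟩ with hm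
  have hbl1 : 1 ≤ b l := by
    have := hblt 0 l (by simpa using h0); omega
  have hasucc : b a.succ = b l := by
    exact congrArg b (Fin.ext (by simp only [ha, Fin.val_succ]; omega))
  have hacs : b a.castSucc < b l := by
    have : b a.castSucc < b a.succ := hbcs a
    omega
  have hmcs : b m.castSucc = b l := by
    exact congrArg b (Fin.ext (by simp [hm]))
  have hmsucc : b l < b m.succ := by
    have := hbcs m; omega
  -- the element at position b l is in C m, not in C a
  have hbln : b l < n := lt_of_lt_of_le (by rw [← hmcs] at hmsucc ⊢; exact hmsucc) (hbsn m)
  have hql : (⟨b l, hbln⟩ : Fin n) ∈ C m := (hC m _).mpr ⟨by simp [hmcs], by simpa using hmsucc⟩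
  have hnotina : (⟨b l, hbln⟩ : Fin n) ∉ C a := by
    intro hmem
    have := ((hC a _).mp hmem).2
    simp [hasucc] at this
  have hCamne : C a ≠ C m := by
    intro heq; rw [heq] at hnotina; exact hnotina hql
  constructor
  · -- right boundary point p = b l - 1
    intro p hp
    have hpa : p ∈ C a := by
      rw [hC]; constructor
      · omega
      · omega
    refine ipstable_iff_aux C p _ (fun q => abs_nonneg _) (by simp) a m hpa
      (fun i hi => hponly p i a hi hpa) hCamne.symm ?_
    intro j hj hjm
    have hja : (j : ℕ) ≠ (l : ℕ) - 1 := by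
      intro h; exact hj (by rw [show j = a from Fin.ext h])
    have hjl : (j : ℕ) ≠ (l : ℕ) := fun h => hjm (Fin.ext h)
    rcases Nat.lt_or_ge (j : ℕ) ((l : ℕ) - 1) with hlt | hge
    · -- cluster far to the left: unconditional
      right
      have h1 : 1 ≤ (C a).card := Finset.one_le_card.mpr ⟨p, hpa⟩
      have hLrw : (∑ y ∈ C a, |x p - x y|) / ((C a).card - 1 : ℝ)
          = (∑ y ∈ (C a).erase p, |x p - x y|) / ((((C a).erase p).card : ℕ) : ℝ) := by
        rw [Finset.sum_erase _ (by simp), Finset.card_erase_of_mem hpa, Nat.cast_sub h1]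
        norm_num
      rw [hLrw]
      refine avg_le_avg' _ _ _ _ (hnonempty j) (fun _ _ => abs_nonneg _) ?_
      intro w hw z hz
      obtain ⟨hw1, hw2⟩ := (hC a w).mp (Finset.mem_of_mem_erase hw)
      obtain ⟨hz1, hz2⟩ := (hC j z).mp hz
      have hjs : b j.succ ≤ b a.castSucc := hble _ _ (by simp [ha]; omega)
      have hwp : (w : ℕ) ≤ (p : ℕ) := by omega
      have hzw : (z : ℕ) ≤ (w : ℕ) := by omega
      rw [habs1 w p hwp, habs1 z p (le_trans hzw hwp)]
      have := hmono z w hzw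
      linarith
    · -- cluster far to the right: chain through C m
      left
      have hjval : (l : ℕ) + 1 ≤ (j : ℕ) := by omega
      refine avg_le_avg' _ _ _ _ (hnonempty j) (fun _ _ => abs_nonneg _) ?_
      intro y hy z hz
      obtain ⟨hy1, hy2⟩ := (hC m y).mp hy
      obtain ⟨hz1, hz2⟩ := (hC j z).mp hz
      have hms : b m.succ ≤ b j.castSucc := hble _ _ (by simp [hm]; omega)
      have hpy : (p : ℕ) ≤ (y : ℕ) := by omega
      have hyz : (y : ℕ) ≤ (z : ℕ) := by omega
      rw [habs2 p y hpy, habs2 p z (le_trans hpy hyz)]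
      have := hmono y z hyz
      linarith
  · -- left boundary point p = b l
    intro p hp
    have hpm : p ∈ C m := by
      rw [hC]; constructor
      · omega
      · omega
    refine ipstable_iff_aux C p _ (fun q => abs_nonneg _) (by simp) m a hpm
      (fun i hi => hponly p i m hi hpm) hCamne ?_
    intro j hj hja'
    have hja : (j : ℕ) ≠ (l : ℕ) - 1 := fun h => hja' (Fin.ext h)
    have hjl : (j : ℕ) ≠ (l : ℕ) := by
      intro h; exact hj (by rw [show j = m from Fin.ext h])
    rcases Nat.lt_or_ge (j : ℕ) ((l : ℕ) - 1) with hlt | hge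
    · -- cluster far to the left: chain through C a
      left
      refine avg_le_avg' _ _ _ _ (hnonempty j) (fun _ _ => abs_nonneg _) ?_
      intro y hy z hz
      obtain ⟨hy1, hy2⟩ := (hC a y).mp hy
      obtain ⟨hz1, hz2⟩ := (hC j z).mp hz
      have hjs : b j.succ ≤ b a.castSucc := hble _ _ (by simp [ha]; omega)
      have hyp' : (y : ℕ) ≤ (p : ℕ) := by omega
      have hzy : (z : ℕ) ≤ (y : ℕ) := by omega
      rw [habs1 y p hyp', habs1 z p (le_trans hzy hyp')]
      have := hmono z y hzy
      linarith
    · -- cluster far to the right: unconditional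
      right
      have hjval : (l : ℕ) + 1 ≤ (j : ℕ) := by omega
      have h1 : 1 ≤ (C m).card := Finset.one_le_card.mpr ⟨p, hpm⟩
      have hLrw : (∑ y ∈ C m, |x p - x y|) / ((C m).card - 1 : ℝ)
          = (∑ y ∈ (C m).erase p, |x p - x y|) / ((((C m).erase p).card : ℕ) : ℝ) := by
        rw [Finset.sum_erase _ (by simp), Finset.card_erase_of_mem hpm, Nat.cast_sub h1]
        norm_num
      rw [hLrw]
      refine avg_le_avg' _ _ _ _ (hnonempty j) (fun _ _ => abs_nonneg _) ?_
      intro w hw z hz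
      obtain ⟨hw1, hw2⟩ := (hC m w).mp (Finset.mem_of_mem_erase hw)
      obtain ⟨hz1, hz2⟩ := (hC j z).mp hz
      have hms : b m.succ ≤ b j.castSucc := hble _ _ (by simp [hm]; omega)
      have hpw : (p : ℕ) ≤ (w : ℕ) := by omega
      have hwz : (w : ℕ) ≤ (z : ℕ) := by omega
      rw [habs2 p w hpw, habs2 p z (le_trans hpw hwz)]
      have := hmono w z hwz
      linarith
end

section
/- Let T=(V,E) be a finite tree with positive edge weights and let d be the induced shortest-path (tree) metric on V, with |V| ≥ 2. Then there exists an edge e∈E such that the 2-clustering of V given by the vertex sets of the two connected components of T∖e is IP-stable. In particular, every finite tree metric admits an IP-stable 2-clustering with connected (contiguous) clusters. -/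
open Finset

open scoped Classical in
/-- The shortest-path (tree) metric induced on the vertices of a tree `G` with
edge weights `w`: the total weight of the unique path between two vertices. -/
noncomputable def treeDist {V : Type*} (G : SimpleGraph V) (hG : G.IsTree)
    (w : Sym2 V → ℝ) (u v : V) : ℝ :=
  (((hG.existsUnique_path u v).exists.choose).edges.map w).sum

/-!
Call the cut at an edge `uv` stable at `u` if `u` is IP-stable in its side `A` against the other
side `B`. Every path from `x ∈ A` into `B` passes through `u`, so `d(x, ·)` exceeds `d(u, ·)` by
exactly `d(x, u)` on `B` and by at most `d(x, u)` on `A`: stability at `u` gives stability of all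
of `A`.

If the cut at `uv` is not stable at `u`, let `I` be the neighbour of `u` in `A` whose branch (its
side of `uI`) has the largest average distance from `u`. The other branches, and by instability
also `B`, have smaller averages, so the cut at `uI` is stable at `u`; and the branch is strictly
smaller than `A`. Among the edges `uv` whose cut is stable at `u`, one with the smallest side of `v`
is therefore stable at both ends.
-/

open SimpleGraph

namespace SimpleGraph

variable {V : Type*} {G : SimpleGraph V}

theorem reachable_deleteEdges_of_notMem_support {a z x y : V} (p : G.Walk a z)
    (hx : x ∉ p.support) : (G.deleteEdges {s(x, y)}).Reachable a z :=
  reachable_deleteEdges_iff_exists_walk.mpr ⟨p, fun h => hx (p.fst_mem_support_of_mem_edges h)⟩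

theorem Reachable.deleteEdges_of_not_reachable {s : Set (Sym2 V)} {a x z : V}
    (hz : (G.deleteEdges s).Reachable a z) (hx : ¬(G.deleteEdges s).Reachable a x) (y : V) :
    (G.deleteEdges {s(x, y)}).Reachable a z := by
  classical
  obtain ⟨q⟩ := hz
  refine reachable_deleteEdges_of_notMem_support (q.mapLe (deleteEdges_le s)) ?_
  rw [Walk.support_mapLe_eq_support]
  exact fun hxq => hx ⟨q.takeUntil x hxq⟩

theorem Connected.reachable_deleteEdges_or (hG : G.Connected) (u v z : V) :
    (G.deleteEdges {s(u, v)}).Reachable u z ∨ (G.deleteEdges {s(u, v)}).Reachable v z := by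
  set H := G.deleteEdges {s(u, v)}
  by_contra! hz
  obtain ⟨⟨⟨a, b⟩, hab⟩, -, ha, hb⟩ := (hG.preconnected u z).some.exists_boundary_dart
    {y | H.Reachable u y ∨ H.Reachable v y} (Or.inl .rfl) (by simpa using hz)
  simp only [Set.mem_ofPred_eq] at ha hb
  by_cases he : s(a, b) = s(u, v)
  · rcases Sym2.eq_iff.mp he with ⟨-, rfl⟩ | ⟨-, rfl⟩
    · exact hb (Or.inr .rfl)
    · exact hb (Or.inl .rfl)
  · have hadj : H.Adj a b := by simp [H, hab, he]
    exact hb (ha.imp (·.trans hadj.reachable) (·.trans hadj.reachable))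

theorem IsTree.not_reachable_deleteEdges (hG : G.IsTree) {u v : V} (h : G.Adj u v) :
    ¬(G.deleteEdges {s(u, v)}).Reachable u v :=
  isAcyclic_iff_forall_adj_isBridge.mp hG.isAcyclic h

variable [Fintype V]

open scoped Classical in
noncomputable def side (G : SimpleGraph V) (u v : V) : Finset V :=
  Finset.univ.filter fun z => (G.deleteEdges {s(u, v)}).Reachable u z

variable {u v z : V}

theorem mem_side : z ∈ G.side u v ↔ (G.deleteEdges {s(u, v)}).Reachable u z := by
  simp [side]

theorem mem_side_swap : z ∈ G.side v u ↔ (G.deleteEdges {s(u, v)}).Reachable v z := by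
  rw [mem_side, Sym2.eq_swap]

theorem self_mem_side (u v : V) : u ∈ G.side u v :=
  mem_side.mpr .rfl

theorem disjoint_side (hG : G.IsTree) (h : G.Adj u v) : Disjoint (G.side u v) (G.side v u) :=
  Finset.disjoint_left.mpr fun _ hu hv =>
    hG.not_reachable_deleteEdges h ((mem_side.mp hu).trans (mem_side_swap.mp hv).symm)

theorem self_notMem_side (hG : G.IsTree) (h : G.Adj u v) : u ∉ G.side v u :=
  Finset.disjoint_left.mp (disjoint_side hG h) (self_mem_side u v)

theorem side_union_side [DecidableEq V] (hG : G.Connected) (u v : V) :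
    G.side u v ∪ G.side v u = Finset.univ :=
  Finset.eq_univ_of_forall fun z => Finset.mem_union.mpr <|
    (hG.reachable_deleteEdges_or u v z).imp mem_side.mpr mem_side_swap.mpr

theorem sum_side_add_sum_side {M : Type*} [AddCommMonoid M] (hG : G.IsTree) (h : G.Adj u v)
    (f : V → M) : ∑ y ∈ G.side u v, f y + ∑ y ∈ G.side v u, f y = ∑ y, f y := by
  classical
  rw [← Finset.sum_union (disjoint_side hG h), side_union_side hG.connected]

theorem card_side_add_card_side (hG : G.IsTree) (h : G.Adj u v) :
    #(G.side u v) + #(G.side v u) = Fintype.card V := by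
  rw [← Finset.card_univ, Finset.card_eq_sum_ones, Finset.card_eq_sum_ones,
    Finset.card_eq_sum_ones]
  exact sum_side_add_sum_side hG h fun _ => 1

theorem side_subset_erase [DecidableEq V] (hG : G.IsTree) {u' : V} (h : G.Adj u v)
    (h' : G.Adj u u') (hne : u' ≠ v) : G.side u' u ⊆ (G.side u v).erase u := by
  intro z hz
  refine Finset.mem_erase.mpr ⟨?_, mem_side.mpr ?_⟩
  · rintro rfl
    exact self_notMem_side hG h' hz
  · have hu' : (G.deleteEdges {s(u, v)}).Adj u u' := by
      simp [h', hne, h'.ne']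
    exact hu'.reachable.trans <| (mem_side.mp hz).deleteEdges_of_not_reachable
      (fun hu => self_notMem_side hG h' (mem_side.mpr hu)) v

theorem disjoint_side_of_ne (hG : G.IsTree) {u' u'' : V} (h' : G.Adj u u') (h'' : G.Adj u u'')
    (hne : u' ≠ u'') : Disjoint (G.side u' u) (G.side u'' u) := by
  refine Finset.disjoint_left.mpr fun z hz' hz'' => hG.not_reachable_deleteEdges h'' ?_
  have hu' : (G.deleteEdges {s(u, u'')}).Adj u u' := by
    simp [h', hne, h'.ne']
  exact hu'.reachable.trans <| ((mem_side.mp hz').deleteEdges_of_not_reachable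
    (fun hu => self_notMem_side hG h' (mem_side.mpr hu)) u'').trans (mem_side_swap.mp hz'').symm

theorem exists_mem_side_of_mem_side (hG : G.IsTree) (h : G.Adj u v) (hz : z ∈ G.side u v)
    (hzu : z ≠ u) : ∃ u', G.Adj u u' ∧ u' ≠ v ∧ z ∈ G.side u' u := by
  obtain ⟨p, hp, -⟩ := hG.existsUnique_path u z
  cases p with
  | nil => exact absurd rfl hzu
  | cons h' q =>
    rename_i u'
    have hz' : z ∈ G.side u' u := mem_side_swap.mpr <|
      reachable_deleteEdges_of_notMem_support q (Walk.cons_isPath_iff h' q |>.mp hp).2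
    refine ⟨u', h', ?_, hz'⟩
    rintro rfl
    exact Finset.disjoint_left.mp (disjoint_side hG h) hz hz'

open scoped Classical in
theorem sum_side_eq_add_sum_sum [DecidableEq V] {M : Type*} [AddCommMonoid M] (hG : G.IsTree)
    (h : G.Adj u v) (f : V → M) : ∑ y ∈ G.side u v, f y =
      f u + ∑ u' ∈ (Finset.univ.filter (G.Adj u)).erase v, ∑ y ∈ G.side u' u, f y := by
  have hbranches : (G.side u v).erase u =
      ((Finset.univ.filter (G.Adj u)).erase v).biUnion (G.side · u) := by
    ext z
    simp only [Finset.mem_biUnion, Finset.mem_erase, Finset.mem_filter, Finset.mem_univ, true_and]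
    constructor
    · rintro ⟨hzu, hz⟩
      obtain ⟨u', h', hne, hz'⟩ := exists_mem_side_of_mem_side hG h hz hzu
      exact ⟨u', ⟨hne, h'⟩, hz'⟩
    · rintro ⟨u', ⟨hne, h'⟩, hz'⟩
      exact Finset.mem_erase.mp (side_subset_erase hG h h' hne hz')
  rw [← Finset.add_sum_erase _ _ (self_mem_side u v), hbranches, Finset.sum_biUnion]
  intro u' hu' u'' hu'' hne
  simp at hu' hu''
  exact disjoint_side_of_ne hG hu'.1 hu''.1 hne

end SimpleGraph

section TreeDist

variable {V : Type*} {G : SimpleGraph V} (hG : G.IsTree) (w : Sym2 V → ℝ)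

theorem treeDist_eq_of_isPath {x y : V} (p : G.Walk x y) (hp : p.IsPath) :
    treeDist G hG w x y = (p.edges.map w).sum := by
  rw [treeDist, (hG.existsUnique_path x y).unique hp (hG.existsUnique_path x y).exists.choose_spec]

theorem treeDist_self (x : V) : treeDist G hG w x x = 0 := by
  simp [treeDist_eq_of_isPath hG w .nil .nil]

variable {w}

theorem treeDist_le_of_walk (hw : ∀ e ∈ G.edgeSet, 0 < w e) {x y : V} (p : G.Walk x y) :
    treeDist G hG w x y ≤ (p.edges.map w).sum := by
  classical
  rw [treeDist_eq_of_isPath hG w p.bypass p.bypass_isPath]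
  obtain ⟨l, hl, hlp⟩ :=
    p.bypass_isPath.isTrail.edges_nodup.subperm p.edges_bypass_subset_edges
  rw [← (hl.map w).sum_eq]
  exact (hlp.map w).sum_le_sum fun _ hwe => by
    obtain ⟨e, he, rfl⟩ := List.mem_map.mp hwe
    exact (hw e (p.edges_subset_edgeSet he)).le

theorem treeDist_nonneg (hw : ∀ e ∈ G.edgeSet, 0 < w e) (x y : V) :
    0 ≤ treeDist G hG w x y := by
  obtain ⟨p, hp, -⟩ := hG.existsUnique_path x y
  rw [treeDist_eq_of_isPath hG w p hp]
  exact List.sum_nonneg fun _ hwe => by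
    obtain ⟨e, he, rfl⟩ := List.mem_map.mp hwe
    exact (hw e (p.edges_subset_edgeSet he)).le

theorem treeDist_triangle (hw : ∀ e ∈ G.edgeSet, 0 < w e) (x y z : V) :
    treeDist G hG w x z ≤ treeDist G hG w x y + treeDist G hG w y z := by
  obtain ⟨p, hp, -⟩ := hG.existsUnique_path x y
  obtain ⟨q, hq, -⟩ := hG.existsUnique_path y z
  simpa [treeDist_eq_of_isPath hG w p hp, treeDist_eq_of_isPath hG w q hq] using
    treeDist_le_of_walk hG hw (p.append q)

theorem treeDist_eq_add_of_mem_support {x y u : V} {p : G.Walk x y} (hp : p.IsPath)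
    (hu : u ∈ p.support) :
    treeDist G hG w x y = treeDist G hG w x u + treeDist G hG w u y := by
  classical
  rw [treeDist_eq_of_isPath hG w _ (hp.takeUntil hu),
    treeDist_eq_of_isPath hG w _ (hp.dropUntil hu), ← List.sum_append, ← List.map_append,
    ← Walk.edges_append, Walk.take_spec, treeDist_eq_of_isPath hG w p hp]

theorem treeDist_eq_add_of_mem_side [Fintype V] {u v x y : V} (h : G.Adj u v)
    (hx : x ∈ G.side u v) (hy : y ∈ G.side v u) :
    treeDist G hG w x y = treeDist G hG w x u + treeDist G hG w u y := by
  obtain ⟨p, hp, -⟩ := hG.existsUnique_path x y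
  refine treeDist_eq_add_of_mem_support hG hp <| not_not.mp fun hu =>
    hG.not_reachable_deleteEdges h ?_
  exact ((mem_side.mp hx).trans (reachable_deleteEdges_of_notMem_support p hu)).trans
    (mem_side_swap.mp hy).symm

end TreeDist

section ClearedIPStable

variable {α : Type*} (d : α → α → ℝ)

/-- The IP-stability inequality of `x ∈ A` against the cluster `B`, with denominators cleared
(so that it holds trivially when `A = {x}`). -/
def ClearedIPStable (A B : Finset α) (x : α) : Prop :=
  (#B : ℝ) * ∑ y ∈ A, d x y ≤ ((#A : ℝ) - 1) * ∑ y ∈ B, d x y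

variable {d}

theorem ClearedIPStable.div_le_div (hd0 : ∀ x y, 0 ≤ d x y) (hself : ∀ x, d x x = 0)
    (htri : ∀ x y z, d x z ≤ d x y + d y z) {A B : Finset α} {u x : α}
    (hu : ClearedIPStable d A B u) (hx : x ∈ A) (hA : 1 < #A) (hB : B.Nonempty)
    (hbetween : ∀ y ∈ B, d x y = d x u + d u y) :
    (∑ y ∈ A, d x y) / ((#A : ℝ) - 1) ≤ (∑ y ∈ B, d x y) / #B := by
  classical
  have ha : (0 : ℝ) < (#A : ℝ) - 1 := by
    have : (1 : ℝ) < #A := by exact_mod_cast hA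
    linarith
  have hb : (0 : ℝ) < #B := by exact_mod_cast hB.card_pos
  have hsumA : ∑ y ∈ A, d x y ≤ ((#A : ℝ) - 1) * d x u + ∑ y ∈ A, d u y := calc
    ∑ y ∈ A, d x y = ∑ y ∈ A.erase x, d x y := by
      rw [← Finset.sum_erase_add _ _ hx, hself, add_zero]
    _ ≤ ∑ y ∈ A.erase x, (d x u + d u y) := Finset.sum_le_sum fun y _ => htri x u y
    _ = ((#A : ℝ) - 1) * d x u + ∑ y ∈ A.erase x, d u y := by
      rw [Finset.sum_add_distrib, Finset.sum_const, Finset.card_erase_of_mem hx, nsmul_eq_mul,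
        Nat.cast_pred (Finset.card_pos.mpr ⟨x, hx⟩)]
    _ ≤ ((#A : ℝ) - 1) * d x u + ∑ y ∈ A, d u y :=
      (add_le_add_iff_left _).mpr <|
        Finset.sum_le_sum_of_subset_of_nonneg (Finset.erase_subset x A) fun y _ _ => hd0 u y
  have hsumB : ∑ y ∈ B, d x y = #B * d x u + ∑ y ∈ B, d u y := by
    rw [Finset.sum_congr rfl hbetween, Finset.sum_add_distrib, Finset.sum_const, nsmul_eq_mul]
  calc (∑ y ∈ A, d x y) / ((#A : ℝ) - 1)
      ≤ d x u + (∑ y ∈ A, d u y) / ((#A : ℝ) - 1) := by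
        rw [div_le_iff₀ ha, add_mul, div_mul_cancel₀ _ ha.ne']
        linarith
    _ ≤ d x u + (∑ y ∈ B, d u y) / #B := by
        refine (add_le_add_iff_left _).mpr ?_
        rw [div_le_div_iff₀ ha hb, mul_comm, mul_comm _ ((#A : ℝ) - 1)]
        exact hu
    _ = (∑ y ∈ B, d x y) / #B := by
        rw [hsumB, add_div, mul_div_cancel_left₀ _ hb.ne']

end ClearedIPStable

/-- The averaging step: `m i` and `s i` are the size of the `i`-th branch at a vertex and the sum
of the distances to it, `I` is a branch of largest average distance, and `b`, `S` are the size and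
distance sum of the other side. -/
theorem mul_sum_add_sub_le_of_forall_mul_le {ι : Type*} {N : Finset ι} {m s : ι → ℝ} {I : ι}
    {S b : ℝ} (hI : I ∈ N) (hm : ∀ i ∈ N, 0 < m i) (hmax : ∀ i ∈ N, s i * m I ≤ s I * m i)
    (hb : 0 ≤ b) (h : (∑ i ∈ N, m i) * S < b * ∑ i ∈ N, s i) :
    m I * (∑ i ∈ N, s i + S - s I) ≤ (∑ i ∈ N, m i + b - m I) * s I := by
  have hsum : m I * ∑ i ∈ N, s i ≤ s I * ∑ i ∈ N, m i := by
    rw [Finset.mul_sum, Finset.mul_sum]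
    exact Finset.sum_le_sum fun i hi => by linarith [hmax i hi]
  have hS : m I * S ≤ b * s I := by
    refine (lt_of_mul_lt_mul_left ?_ (Finset.sum_pos hm ⟨I, hI⟩).le).le
    calc (∑ i ∈ N, m i) * (m I * S) = m I * ((∑ i ∈ N, m i) * S) := by ring
      _ < m I * (b * ∑ i ∈ N, s i) := mul_lt_mul_of_pos_left h (hm I hI)
      _ = b * (m I * ∑ i ∈ N, s i) := by ring
      _ ≤ b * (s I * ∑ i ∈ N, m i) := mul_le_mul_of_nonneg_left hsum hb
      _ = (∑ i ∈ N, m i) * (b * s I) := by ring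
  linarith

section TwoClusters

variable {α : Type*} [DecidableEq α]

theorem isClustering_pair {D A B : Finset α} (hA : A.Nonempty) (hB : B.Nonempty)
    (hAB : Disjoint A B) (hD : A ∪ B = D) : IsClustering D ![A, B] := by
  refine ⟨Fin.forall_fin_two.mpr ⟨hA, hB⟩, ?_, ?_⟩
  · intro i j hij
    fin_cases i <;> fin_cases j <;> simp_all [disjoint_comm]
  · rw [← hD]
    ext
    simp [Fin.exists_fin_two]

theorem ipStablePt_pair {d : α → α → ℝ} {A B : Finset α} {x : α}
    (hA : x ∈ A → A ≠ {x} → (∑ y ∈ A, d x y) / ((#A : ℝ) - 1) ≤ (∑ y ∈ B, d x y) / #B)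
    (hB : x ∈ B → B ≠ {x} → (∑ y ∈ B, d x y) / ((#B : ℝ) - 1) ≤ (∑ y ∈ A, d x y) / #A) :
    IPStablePt d ![A, B] x := by
  intro i hx
  rw [or_iff_not_imp_left]
  intro hne j hj
  fin_cases i <;> fin_cases j <;> simp_all

end TwoClusters

section Tree

variable {V : Type*} [Fintype V] {G : SimpleGraph V} (hG : G.IsTree) {w : Sym2 V → ℝ}

theorem ClearedIPStable.treeDist_div_le_div (hw : ∀ e ∈ G.edgeSet, 0 < w e)
    {u v x : V} (h : G.Adj u v)
    (hu : ClearedIPStable (treeDist G hG w) (G.side u v) (G.side v u) u)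
    (hx : x ∈ G.side u v) (hne : G.side u v ≠ {x}) :
    (∑ y ∈ G.side u v, treeDist G hG w x y) / ((#(G.side u v) : ℝ) - 1) ≤
      (∑ y ∈ G.side v u, treeDist G hG w x y) / #(G.side v u) :=
  hu.div_le_div (treeDist_nonneg hG hw) (treeDist_self hG w) (treeDist_triangle hG hw) hx
    (Finset.one_lt_card_iff_nontrivial.mpr ((Finset.nontrivial_iff_ne_singleton hx).mpr hne))
    ⟨v, self_mem_side v u⟩ fun _ hy => treeDist_eq_add_of_mem_side hG h hx hy

theorem exists_clearedIPStable_side_of_not {u v : V} (h : G.Adj u v)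
    (hnot : ¬ClearedIPStable (treeDist G hG w) (G.side u v) (G.side v u) u) :
    ∃ u', G.Adj u u' ∧ u' ≠ v ∧
      ClearedIPStable (treeDist G hG w) (G.side u u') (G.side u' u) u := by
  classical
  set d := treeDist G hG w
  set N := (Finset.univ.filter (G.Adj u)).erase v
  set m : V → ℝ := fun i => #(G.side i u)
  set s : V → ℝ := fun i => ∑ y ∈ G.side i u, d u y
  have hA : ∑ y ∈ G.side u v, d u y = ∑ i ∈ N, s i := by
    rw [sum_side_eq_add_sum_sum hG h, show d u u = 0 from treeDist_self hG w u, zero_add]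
  have hAcard : (#(G.side u v) : ℝ) = 1 + ∑ i ∈ N, m i := by
    simpa using sum_side_eq_add_sum_sum hG h fun _ => (1 : ℝ)
  have hlt : (∑ i ∈ N, m i) * ∑ y ∈ G.side v u, d u y < #(G.side v u) * ∑ i ∈ N, s i := by
    unfold ClearedIPStable at hnot
    rw [hA, hAcard] at hnot
    linarith
  have hN : N.Nonempty := by
    by_contra hN
    rw [Finset.not_nonempty_iff_eq_empty.mp hN] at hlt
    simp at hlt
  obtain ⟨I, hI, hmax⟩ := N.exists_max_image (fun i => s i / m i) hN
  have hm : ∀ i ∈ N, 0 < m i := fun i _ => by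
    simpa [m] using ⟨i, self_mem_side i u⟩
  obtain ⟨hIv, hI'⟩ := Finset.mem_erase.mp hI
  have huI : G.Adj u I := (Finset.mem_filter.mp hI').2
  refine ⟨I, huI, hIv, ?_⟩
  have hfar : ∑ y ∈ G.side u I, d u y = ∑ i ∈ N, s i + ∑ y ∈ G.side v u, d u y - s I := by
    linarith [sum_side_add_sum_side hG h (d u), sum_side_add_sum_side hG huI (d u)]
  have hfarCard : (#(G.side u I) : ℝ) - 1 = ∑ i ∈ N, m i + #(G.side v u) - m I := by
    have := congrArg (Nat.cast (R := ℝ))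
      ((card_side_add_card_side hG h).trans (card_side_add_card_side hG huI).symm)
    push_cast at this
    linarith
  unfold ClearedIPStable
  rw [hfar, hfarCard]
  exact mul_sum_add_sub_le_of_forall_mul_le hI hm
    (fun i hi => (div_le_div_iff₀ (hm i hi) (hm I hI)).mp (hmax i hi)) (Nat.cast_nonneg _) hlt

theorem exists_adj_clearedIPStable_of_adj {a b : V} (hab : G.Adj a b) :
    ∃ u v, G.Adj u v ∧ ClearedIPStable (treeDist G hG w) (G.side u v) (G.side v u) u ∧
      ClearedIPStable (treeDist G hG w) (G.side v u) (G.side u v) v := by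
  classical
  have hex : ∃ p : V × V, G.Adj p.1 p.2 ∧
      ClearedIPStable (treeDist G hG w) (G.side p.1 p.2) (G.side p.2 p.1) p.1 := by
    by_cases hcut : ClearedIPStable (treeDist G hG w) (G.side a b) (G.side b a) a
    · exact ⟨(a, b), hab, hcut⟩
    · obtain ⟨b', hab', -, hcut'⟩ := exists_clearedIPStable_side_of_not hG hab hcut
      exact ⟨(a, b'), hab', hcut'⟩
  obtain ⟨⟨u, v⟩, ⟨huv, hcut⟩, hmin⟩ :=
    (measure fun p : V × V => #(G.side p.2 p.1)).wf.has_min _ hex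
  refine ⟨u, v, huv, hcut, by_contra fun hnot => ?_⟩
  obtain ⟨v', hvv', hne, hcut'⟩ := exists_clearedIPStable_side_of_not hG huv.symm hnot
  exact hmin (v, v') ⟨hvv', hcut'⟩ <|
    (Finset.card_le_card (side_subset_erase hG huv.symm hvv' hne)).trans_lt
      (Finset.card_erase_lt_of_mem (self_mem_side v u))

end Tree

open scoped Classical in
/-- every finite tree with positive edge weights (at least two
vertices) admits an edge whose removal yields an IP-stable 2-clustering of the
vertices by connected components; in particular every finite tree metric admits
an IP-stable 2-clustering with connected clusters. -/
theorem ip_stable_two_clustering_exists_on_tree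
    {V : Type*} [Fintype V] [DecidableEq V]
    (G : SimpleGraph V) (hG : G.IsTree) (hV : 2 ≤ Fintype.card V)
    (w : Sym2 V → ℝ) (hw : ∀ e ∈ G.edgeSet, 0 < w e) :
    ∃ u v : V, G.Adj u v ∧
      IsClustering Finset.univ
        ![Finset.univ.filter fun z => (G.deleteEdges {s(u, v)}).Reachable u z,
          Finset.univ.filter fun z => (G.deleteEdges {s(u, v)}).Reachable v z] ∧
      ∀ x : V, IPStablePt (treeDist G hG w)
        ![Finset.univ.filter fun z => (G.deleteEdges {s(u, v)}).Reachable u z,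
          Finset.univ.filter fun z => (G.deleteEdges {s(u, v)}).Reachable v z] x := by
  have : Nontrivial V := Fintype.one_lt_card_iff_nontrivial.mp hV
  obtain ⟨a, -⟩ := exists_pair_ne V
  obtain ⟨b, hab⟩ := hG.connected.preconnected.exists_adj_of_nontrivial a
  obtain ⟨u, v, huv, hu, hv⟩ := exists_adj_clearedIPStable_of_adj hG (w := w) hab
  have hsides : (Finset.univ.filter fun z => (G.deleteEdges {s(u, v)}).Reachable u z) =
      G.side u v ∧ (Finset.univ.filter fun z => (G.deleteEdges {s(u, v)}).Reachable v z) =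
      G.side v u :=
    ⟨Finset.ext fun _ => by simp [mem_side], Finset.ext fun _ => by simp [mem_side_swap]⟩
  refine ⟨u, v, huv, ?_, fun x => ?_⟩ <;> rw [hsides.1, hsides.2]
  · exact isClustering_pair ⟨u, self_mem_side u v⟩ ⟨v, self_mem_side v u⟩ (disjoint_side hG huv)
      (side_union_side hG.connected u v)
  · exact ipStablePt_pair (hu.treeDist_div_le_div hG hw huv)
      (hv.treeDist_div_le_div hG hw huv.symm)
end

section
/- Let d be a metric on a finite set D of n points, let γ > 1, and let C=(C_1,…,C_k) be an (α,γ)-clustering of D. Then for all i≠j, every x∈C_i and every y∈C_j satisfy ((γ−1)/γ)·d̄(y,C_i) ≤ d(x,y) ≤ ((γ²+1)/(γ(γ−1)))·d̄(y,C_i), where d̄(y,C_i) = (1/|C_i|)·Σ_{z∈C_i} d(y,z). -/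
open Finset

/-- Average distance from `x` to the points of the cluster `C`
(excluding `x` itself if `x ∈ C`; note `dist x x = 0`). -/
noncomputable def avgD {α : Type*} [DecidableEq α] [MetricSpace α]
    (x : α) (C : Finset α) : ℝ :=
  (∑ y ∈ C, dist x y) / (if x ∈ C then ((C.card : ℝ) - 1) else (C.card : ℝ))

/-- `C` is an `(a, γ)`-clustering of `D`: a `k`-clustering whose clusters all
have at least `a·|D|` points, and every point is (on average) at least a factor
`γ` closer to its own cluster than to any other cluster. -/
def IsAGClustering {α : Type*} [DecidableEq α] [MetricSpace α]
    (D : Finset α) (a γ : ℝ) {k : ℕ} (C : Fin k → Finset α) : Prop :=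
  IsClustering D C ∧ (∀ i, a * (D.card : ℝ) ≤ ((C i).card : ℝ)) ∧
    (∀ i j, i ≠ j → ∀ x ∈ C i, γ * avgD x (C i) ≤ avgD x (C j))

lemma sum_dist_le_card_avgD {α : Type*} [DecidableEq α] [MetricSpace α]
    {p : α} {S : Finset α} (hp : p ∈ S) :
    ∑ z ∈ S, dist p z ≤ (S.card : ℝ) * avgD p S := by
  have hsum : (0:ℝ) ≤ ∑ z ∈ S, dist p z := Finset.sum_nonneg fun _ _ => dist_nonneg
  unfold avgD
  rw [if_pos hp]
  rcases eq_or_lt_of_le (Finset.one_le_card.mpr ⟨p, hp⟩) with h | h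
  · obtain ⟨c, hc⟩ := Finset.card_eq_one.mp h.symm
    have hpc : p = c := by simpa [hc] using hp
    simp [hc, hpc]
  · have h1 : (0:ℝ) < (S.card:ℝ) - 1 := by
      have : (1:ℝ) < (S.card:ℝ) := by exact_mod_cast h
      linarith
    rw [mul_div_assoc', le_div_iff₀ h1]
    have : (0:ℝ) ≤ (S.card:ℝ) := by positivity
    nlinarith

lemma avgD_nonneg {α : Type*} [DecidableEq α] [MetricSpace α]
    (p : α) {S : Finset α} (hS : S.Nonempty) : 0 ≤ avgD p S := by
  have hsum : (0:ℝ) ≤ ∑ z ∈ S, dist p z := Finset.sum_nonneg fun _ _ => dist_nonneg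
  have hc : (1:ℝ) ≤ (S.card:ℝ) := by exact_mod_cast Finset.one_le_card.mpr hS
  unfold avgD
  split_ifs <;> apply div_nonneg hsum <;> linarith


/-- in an `(a, γ)`-clustering with `γ > 1`, for `x ∈ C i` and
`y ∈ C j` with `i ≠ j`:
`((γ−1)/γ)·d̄(y, C i) ≤ d(x, y) ≤ ((γ²+1)/(γ(γ−1)))·d̄(y, C i)`. -/
theorem ag_clustering_inter_cluster_distance_bounds
    {α : Type*} [DecidableEq α] [MetricSpace α]
    (D : Finset α) (a γ : ℝ) (hγ : 1 < γ)
    {k : ℕ} (C : Fin k → Finset α) (hC : IsAGClustering D a γ C)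
    (i j : Fin k) (hij : i ≠ j) (x : α) (hx : x ∈ C i) (y : α) (hy : y ∈ C j) :
    ((γ - 1) / γ) * avgD y (C i) ≤ dist x y ∧
      dist x y ≤ ((γ ^ 2 + 1) / (γ * (γ - 1))) * avgD y (C i) := by
  obtain ⟨⟨hne, hdisj, -⟩, -, hsep⟩ := hC
  have hγ0 : (0:ℝ) < γ := by linarith
  have hyi : y ∉ C i := Finset.disjoint_right.mp (hdisj i j hij) hy
  have hxj : x ∉ C j := Finset.disjoint_left.mp (hdisj i j hij) hx
  set u := avgD x (C i) with hu_def
  set t := avgD y (C i) with ht_def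
  set v := avgD x (C j) with hv_def
  set w := avgD y (C j) with hw_def
  set d := dist x y with hd_def
  have hni : (0:ℝ) < ((C i).card : ℝ) := by exact_mod_cast Finset.card_pos.mpr (hne i)
  have hnj : (0:ℝ) < ((C j).card : ℝ) := by exact_mod_cast Finset.card_pos.mpr (hne j)
  have ht_eq : ((C i).card : ℝ) * t = ∑ z ∈ C i, dist y z := by
    rw [ht_def]; unfold avgD; rw [if_neg hyi, mul_div_cancel₀ _ (ne_of_gt hni)]
  have hv_eq : ((C j).card : ℝ) * v = ∑ z ∈ C j, dist x z := by
    rw [hv_def]; unfold avgD; rw [if_neg hxj, mul_div_cancel₀ _ (ne_of_gt hnj)]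
  have hu_le : ∑ z ∈ C i, dist x z ≤ ((C i).card : ℝ) * u := sum_dist_le_card_avgD hx
  have hw_le : ∑ z ∈ C j, dist y z ≤ ((C j).card : ℝ) * w := sum_dist_le_card_avgD hy
  -- t ≤ d + u
  have h1 : t ≤ d + u := by
    have hs : ∑ z ∈ C i, dist y z ≤ ∑ z ∈ C i, (dist y x + dist x z) :=
      Finset.sum_le_sum fun z _ => dist_triangle y x z
    rw [Finset.sum_add_distrib, Finset.sum_const, nsmul_eq_mul] at hs
    have : ((C i).card : ℝ) * t ≤ ((C i).card : ℝ) * (d + u) := by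
      rw [ht_eq, mul_add]
      calc ∑ z ∈ C i, dist y z ≤ ((C i).card : ℝ) * dist y x + ∑ z ∈ C i, dist x z := hs
        _ ≤ ((C i).card : ℝ) * d + ((C i).card : ℝ) * u := by
            rw [dist_comm y x]; exact add_le_add le_rfl hu_le
    exact le_of_mul_le_mul_left this hni
  -- d ≤ u + t
  have h2 : d ≤ u + t := by
    have hs : ∑ _z ∈ C i, d ≤ ∑ z ∈ C i, (dist x z + dist z y) :=
      Finset.sum_le_sum fun z _ => dist_triangle x z y
    rw [Finset.sum_add_distrib, Finset.sum_const, nsmul_eq_mul] at hs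
    have hcomm : ∑ z ∈ C i, dist z y = ∑ z ∈ C i, dist y z := by
      refine Finset.sum_congr rfl fun z _ => dist_comm z y
    rw [hcomm] at hs
    have : ((C i).card : ℝ) * d ≤ ((C i).card : ℝ) * (u + t) := by
      rw [mul_add]
      calc ((C i).card : ℝ) * d ≤ ∑ z ∈ C i, dist x z + ∑ z ∈ C i, dist y z := hs
        _ ≤ ((C i).card : ℝ) * u + ((C i).card : ℝ) * t := by
            rw [← ht_eq]; exact add_le_add hu_le le_rfl
    exact le_of_mul_le_mul_left this hni
  -- γ u ≤ d + w
  have h3 : γ * u ≤ d + w := by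
    refine le_trans (hsep i j hij x hx) ?_
    have hs : ∑ z ∈ C j, dist x z ≤ ∑ z ∈ C j, (dist x y + dist y z) :=
      Finset.sum_le_sum fun z _ => dist_triangle x y z
    rw [Finset.sum_add_distrib, Finset.sum_const, nsmul_eq_mul] at hs
    have : ((C j).card : ℝ) * v ≤ ((C j).card : ℝ) * (d + w) := by
      rw [hv_eq, mul_add]
      exact le_trans hs (add_le_add le_rfl hw_le)
    exact le_of_mul_le_mul_left this hnj
  -- γ w ≤ t
  have h4 : γ * w ≤ t := hsep j i hij.symm y hy
  have hu0 : 0 ≤ u := avgD_nonneg x (hne i)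
  have ht0 : 0 ≤ t := avgD_nonneg y (hne i)
  have hw0 : 0 ≤ w := avgD_nonneg y (hne j)
  have hd0 : 0 ≤ d := dist_nonneg
  constructor
  · rw [div_mul_eq_mul_div, div_le_iff₀ hγ0]
    nlinarith [mul_le_mul_of_nonneg_left h1 (le_of_lt (mul_pos hγ0 hγ0)),
      mul_le_mul_of_nonneg_left h3 (le_of_lt hγ0), h4, mul_pos hγ0 hγ0]
  · rw [div_mul_eq_mul_div, le_div_iff₀ (by nlinarith : (0:ℝ) < γ * (γ - 1))]
    nlinarith [mul_le_mul_of_nonneg_left h2 (le_of_lt (mul_pos hγ0 hγ0)),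
      mul_le_mul_of_nonneg_left h3 (le_of_lt hγ0), h4]
end

section
/- Let d be a metric on a finite set D of n points, let γ > 1, and let C=(C_1,…,C_k) be an (α,γ)-clustering of D. Then for all i≠j and all x,y∈C_i, d(x,y) ≤ (2/(γ−1))·d̄(x,C_j), where d̄(x,C_j) = (1/|C_j|)·Σ_{z∈C_j} d(x,z). -/
open Finset

/-! Both `x` and `y` lie in `C i`, so averaging the triangle inequality over `C i` gives
`d(x, y) ≤ d̄(x, C i) + d̄(y, C i)`, which the separation condition bounds by
`(d̄(x, C j) + d̄(y, C j)) / γ`; averaging the triangle inequality over `C j` instead gives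
`d̄(y, C j) ≤ d(x, y) + d̄(x, C j)`. Together, `(γ - 1) d(x, y) ≤ 2 d̄(x, C j)`. -/

theorem card_mul_dist_le_sum_dist_add_sum_dist {α : Type*} [PseudoMetricSpace α]
    (C : Finset α) (x y : α) :
    (C.card : ℝ) * dist x y ≤ ∑ z ∈ C, dist x z + ∑ z ∈ C, dist y z := by
  rw [← sum_add_distrib, ← nsmul_eq_mul]
  exact card_nsmul_le_sum _ _ _ fun z _ => dist_triangle_right x y z

section avgD

variable {α : Type*} [DecidableEq α] [MetricSpace α] {x y : α} {C : Finset α}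

theorem avgD_of_mem (hx : x ∈ C) :
    avgD x C = (∑ z ∈ C, dist x z) / ((C.card : ℝ) - 1) := by
  simp only [avgD, if_pos hx]

theorem avgD_of_notMem (hx : x ∉ C) :
    avgD x C = (∑ z ∈ C, dist x z) / (C.card : ℝ) := by
  simp only [avgD, if_neg hx]

theorem avgD_nonneg_s9 : 0 ≤ avgD x C := by
  refine div_nonneg (sum_nonneg fun z _ => dist_nonneg) ?_
  split_ifs with hx
  · exact sub_nonneg.mpr (by exact_mod_cast card_pos.mpr ⟨x, hx⟩)
  · positivity

theorem dist_le_avgD_add_avgD (hx : x ∈ C) (hy : y ∈ C) :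
    dist x y ≤ avgD x C + avgD y C := by
  rcases eq_or_ne x y with rfl | hxy
  · rw [dist_self]
    exact add_nonneg avgD_nonneg_s9 avgD_nonneg_s9
  have hpair : {x, y} ⊆ C := insert_subset hx (singleton_subset_iff.mpr hy)
  have hcard : (2 : ℝ) ≤ C.card := by
    exact_mod_cast (card_pair hxy).symm.le.trans (card_le_card hpair)
  rw [avgD_of_mem hx, avgD_of_mem hy, ← add_div, le_div_iff₀ (by linarith)]
  nlinarith [card_mul_dist_le_sum_dist_add_sum_dist C x y, dist_nonneg (x := x) (y := y)]

theorem avgD_le_dist_add_avgD (hx : x ∉ C) (hy : y ∉ C) :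
    avgD y C ≤ dist x y + avgD x C := by
  rcases C.eq_empty_or_nonempty with rfl | hC
  · simp [avgD]
  have hcard : (0 : ℝ) < C.card := by exact_mod_cast hC.card_pos
  have hsum : ∑ z ∈ C, dist y z ≤ C.card * dist x y + ∑ z ∈ C, dist x z := by
    rw [← nsmul_eq_mul, ← sum_const, ← sum_add_distrib]
    exact sum_le_sum fun z _ => dist_triangle_left y z x
  rw [avgD_of_notMem hx, avgD_of_notMem hy, div_le_iff₀ hcard, add_mul,
    div_mul_cancel₀ _ hcard.ne']
  linarith

end avgD

/-- in an `(a, γ)`-clustering with `γ > 1`, for `x, y ∈ C i` and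
any other cluster `C j`: `d(x, y) ≤ (2/(γ−1))·d̄(x, C j)`. -/
theorem ag_clustering_intra_cluster_distance_bound
    {α : Type*} [DecidableEq α] [MetricSpace α]
    (D : Finset α) (a γ : ℝ) (hγ : 1 < γ)
    {k : ℕ} (C : Fin k → Finset α) (hC : IsAGClustering D a γ C)
    (i j : Fin k) (hij : i ≠ j) (x : α) (hx : x ∈ C i) (y : α) (hy : y ∈ C i) :
    dist x y ≤ (2 / (γ - 1)) * avgD x (C j) := by
  obtain ⟨⟨-, hdisj, -⟩, -, hsep⟩ := hC
  have hxj : x ∉ C j := disjoint_left.mp (hdisj i j hij) hx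
  have hyj : y ∉ C j := disjoint_left.mp (hdisj i j hij) hy
  have hcross := avgD_le_dist_add_avgD hxj hyj
  have hγd : γ * dist x y ≤ γ * avgD x (C i) + γ * avgD y (C i) := by
    rw [← mul_add]
    exact mul_le_mul_of_nonneg_left (dist_le_avgD_add_avgD hx hy) (by linarith)
  rw [div_mul_eq_mul_div, le_div_iff₀ (by linarith)]
  linarith [hsep i j hij x hx, hsep i j hij y hy]
end

section
/- Let d be a metric on a finite set D of n points, let γ > 1, and let C=(C_1,…,C_k) be an (α,γ)-clustering of D. Let i≠j, let D'⊆C_i and D''⊆C_j, and let x∈D' and y,y'∈D''. Then d(x,y)/d(x,y') ≤ (γ²+1)/(γ−1)². -/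
/-!
Write `d = d(x, w)` for `x ∈ C i`, `w ∈ C j`, and `B` for the average distance from `x` to
`C j`. Averaging the triangle inequality over a cluster bounds each of `B`, the average
distance from `w` to `C i`, and `d` itself by `d` or `B` plus an average distance from the
other point; chaining these through the two separation inequalities (at `x` and at `w`)
gives `(γ - 1) B ≤ γ d ≤ (γ² + 1) B / (γ - 1)`. Applying the lower bound to `w = y'` and the
upper bound to `w = y` yields the ratio bound.
-/

open Finset

open scoped BigOperators

section AverageDistance

variable {α : Type*} [MetricSpace α]

lemma expect_dist_le_dist_add_expect_dist {C : Finset α} (hC : C.Nonempty) (u v : α) :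
    𝔼 z ∈ C, dist u z ≤ dist u v + 𝔼 z ∈ C, dist v z :=
  calc 𝔼 z ∈ C, dist u z ≤ 𝔼 z ∈ C, (dist u v + dist v z) :=
        expect_le_expect fun z _ => dist_triangle u v z
    _ = dist u v + 𝔼 z ∈ C, dist v z := by rw [expect_add_distrib, expect_const hC]

lemma dist_le_expect_dist_add_expect_dist {C : Finset α} (hC : C.Nonempty) (u v : α) :
    dist u v ≤ 𝔼 z ∈ C, dist u z + 𝔼 z ∈ C, dist v z :=
  calc dist u v = 𝔼 _z ∈ C, dist u v := (expect_const hC _).symm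
    _ ≤ 𝔼 z ∈ C, (dist u z + dist v z) :=
        expect_le_expect fun z _ => dist_triangle_right u v z
    _ = 𝔼 z ∈ C, dist u z + 𝔼 z ∈ C, dist v z := expect_add_distrib _ _ _

variable [DecidableEq α]

lemma avgD_eq_expect_dist {x : α} {C : Finset α} (hx : x ∉ C) :
    avgD x C = 𝔼 z ∈ C, dist x z := by
  rw [avgD, if_neg hx, expect_eq_sum_div_card]

lemma expect_dist_le_avgD (x : α) (C : Finset α) : 𝔼 z ∈ C, dist x z ≤ avgD x C := by
  by_cases hx : x ∈ C
  · rw [avgD, if_pos hx, expect_eq_sum_div_card]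
    obtain hC | hC := (one_le_card.mpr ⟨x, hx⟩).eq_or_lt
    · obtain ⟨a, rfl⟩ := card_eq_one.mp hC.symm
      obtain rfl := mem_singleton.mp hx
      simp
    · have h2 : (2 : ℝ) ≤ C.card := by exact_mod_cast hC
      exact div_le_div_of_nonneg_left (sum_nonneg fun _ _ => dist_nonneg) (by linarith)
        (by linarith)
  · exact (avgD_eq_expect_dist hx).ge

lemma avgD_le_dist_add_avgD_s11 {u v : α} {C : Finset α} (hu : u ∉ C) (hv : v ∈ C) :
    avgD u C ≤ dist u v + avgD v C := by
  rw [avgD_eq_expect_dist hu]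
  linarith [expect_dist_le_dist_add_expect_dist ⟨v, hv⟩ u v, expect_dist_le_avgD v C]

lemma dist_le_avgD_add_avgD_s11 (u : α) {v : α} {C : Finset α} (hv : v ∈ C) :
    dist u v ≤ avgD u C + avgD v C := by
  linarith [dist_le_expect_dist_add_expect_dist ⟨v, hv⟩ u v, expect_dist_le_avgD u C,
    expect_dist_le_avgD v C]

end AverageDistance

section SeparatedClusters

variable {α : Type*} [DecidableEq α] [MetricSpace α] {x w : α} {S T : Finset α} {γ : ℝ}

lemma avgD_mul_sub_one_le_mul_dist (hγ : 0 ≤ γ) (hxS : x ∈ S) (hwS : w ∉ S)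
    (hxT : x ∉ T) (hwT : w ∈ T)
    (hsepx : γ * avgD x S ≤ avgD x T) (hsepw : γ * avgD w T ≤ avgD w S) :
    avgD x T * (γ - 1) ≤ γ * dist x w := by
  have hwx : avgD w S ≤ dist x w + avgD x S := by
    simpa only [dist_comm] using avgD_le_dist_add_avgD_s11 hwS hxS
  have hxw : avgD x T ≤ dist x w + avgD w T := avgD_le_dist_add_avgD_s11 hxT hwT
  -- `γ² B ≤ γ² d + γ d + B`, and `γ² - 1 = (γ - 1)(γ + 1)`
  nlinarith [mul_le_mul_of_nonneg_left hxw (sq_nonneg γ), mul_le_mul_of_nonneg_left hsepw hγ,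
    mul_le_mul_of_nonneg_left hwx hγ]

lemma mul_sub_one_mul_dist_le_avgD (hγ : 0 ≤ γ) (hxS : x ∈ S) (hwS : w ∉ S) (hwT : w ∈ T)
    (hsepx : γ * avgD x S ≤ avgD x T) (hsepw : γ * avgD w T ≤ avgD w S) :
    γ * (γ - 1) * dist x w ≤ (γ ^ 2 + 1) * avgD x T := by
  have hwx : avgD w S ≤ dist x w + avgD x S := by
    simpa only [dist_comm] using avgD_le_dist_add_avgD_s11 hwS hxS
  have hd : dist x w ≤ avgD x T + avgD w T := dist_le_avgD_add_avgD_s11 x hwT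
  -- `γ² d ≤ γ² B + γ d + B`
  nlinarith [mul_le_mul_of_nonneg_left hd (sq_nonneg γ), mul_le_mul_of_nonneg_left hsepw hγ,
    mul_le_mul_of_nonneg_left hwx hγ]

end SeparatedClusters

/-- in an `(a, γ)`-clustering with `γ > 1`, for subsets
`D' ⊆ C i`, `D'' ⊆ C j` (`i ≠ j`), `x ∈ D'` and `y, y' ∈ D''`:
`d(x,y)/d(x,y') ≤ (γ²+1)/(γ−1)²`. -/
theorem ag_clustering_ratio_bound
    {α : Type*} [DecidableEq α] [MetricSpace α]
    (D : Finset α) (a γ : ℝ) (hγ : 1 < γ)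
    {k : ℕ} (C : Fin k → Finset α) (hC : IsAGClustering D a γ C)
    (i j : Fin k) (hij : i ≠ j)
    (D' D'' : Finset α) (hD' : D' ⊆ C i) (hD'' : D'' ⊆ C j)
    (x : α) (hx : x ∈ D') (y : α) (hy : y ∈ D'') (y' : α) (hy' : y' ∈ D'') :
    dist x y / dist x y' ≤ (γ ^ 2 + 1) / (γ - 1) ^ 2 := by
  obtain ⟨⟨-, hdisj, -⟩, -, hsep⟩ := hC
  have hxi : x ∈ C i := hD' hx
  have hxj : x ∉ C j := disjoint_left.mp (hdisj i j hij) hxi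
  have hji : ∀ w ∈ C j, w ∉ C i := fun _ hw => disjoint_right.mp (hdisj i j hij) hw
  have hyj : y ∈ C j := hD'' hy
  have hy'j : y' ∈ C j := hD'' hy'
  have lower := avgD_mul_sub_one_le_mul_dist (by linarith) hxi (hji y' hy'j) hxj hy'j
    (hsep i j hij x hxi) (hsep j i hij.symm y' hy'j)
  have upper := mul_sub_one_mul_dist_le_avgD (by linarith) hxi (hji y hyj) hyj
    (hsep i j hij x hxi) (hsep j i hij.symm y hyj)
  have hxy' : 0 < dist x y' := dist_pos.mpr fun h => hxj (h ▸ hy'j)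
  have hγ1 : 0 < γ - 1 := sub_pos.mpr hγ
  rw [div_le_div_iff₀ hxy' (by positivity)]
  -- multiply `upper` by `γ - 1` and `lower` by `γ² + 1`, then cancel `γ`
  nlinarith [mul_le_mul_of_nonneg_right upper hγ1.le,
    mul_le_mul_of_nonneg_left lower (by positivity : (0 : ℝ) ≤ γ ^ 2 + 1)]
end

section
/- Let d be a metric on a finite set D of n points, let γ > 1, and let C=(C_1,…,C_k) be an (α,γ)-clustering of D. Let i≠j, let D'⊆C_i and D''⊆C_j, and let x∈D' and y∈D''. Then for every x'∈D', d(x,x') ≤ (2γ/(γ−1)²)·d(x,y). (Equivalently: if some x'∈D' satisfies d(x,x') > (2γ/(γ−1)²)·d(x,y), then x and y must belong to the same cluster of the (α,γ)-clustering.) -/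
open Finset

set_option maxHeartbeats 1000000 in
/-- in an `(a, γ)`-clustering with `γ > 1`, for subsets
`D' ⊆ C i`, `D'' ⊆ C j` (`i ≠ j`), `x ∈ D'` and `y ∈ D''`: every `x' ∈ D'`
satisfies `d(x,x') ≤ (2γ/(γ−1)²)·d(x,y)`. -/
theorem ag_clustering_inner_vs_cross_bound
    {α : Type*} [DecidableEq α] [MetricSpace α]
    (D : Finset α) (a γ : ℝ) (hγ : 1 < γ)
    {k : ℕ} (C : Fin k → Finset α) (hC : IsAGClustering D a γ C)
    (i j : Fin k) (hij : i ≠ j)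
    (D' D'' : Finset α) (hD' : D' ⊆ C i) (hD'' : D'' ⊆ C j)
    (x : α) (hx : x ∈ D') (y : α) (hy : y ∈ D'') :
    ∀ x' ∈ D', dist x x' ≤ (2 * γ / (γ - 1) ^ 2) * dist x y := by
  intro x' hx'
  obtain ⟨⟨hne, hdisj, hcover⟩, hsize, hsep⟩ := hC
  have hγ0 : (0:ℝ) < γ := by linarith
  have hγ1 : (0:ℝ) < γ - 1 := by linarith
  have hxi : x ∈ C i := hD' hx
  have hx'i : x' ∈ C i := hD' hx'
  have hyj : y ∈ C j := hD'' hy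
  have hxj : x ∉ C j := Finset.disjoint_left.mp (hdisj i j hij) hxi
  have hx'j : x' ∉ C j := Finset.disjoint_left.mp (hdisj i j hij) hx'i
  have hyi : y ∉ C i := Finset.disjoint_left.mp (hdisj j i hij.symm) hyj
  have hm1 : 1 ≤ (C i).card := Finset.card_pos.mpr ⟨x, hxi⟩
  have hp1 : 1 ≤ (C j).card := Finset.card_pos.mpr ⟨y, hyj⟩
  rcases Nat.lt_or_ge (C i).card 2 with hm | hm
  · -- C i = {x}, so x' = x
    have hcard : (C i).card = 1 := by omega
    obtain ⟨z, hz⟩ := Finset.card_eq_one.mp hcard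
    rw [hz] at hxi hx'i
    have : x' = x := by
      rw [Finset.mem_singleton] at hxi hx'i; rw [hxi, hx'i]
    rw [this, dist_self]
    have h2 : (0:ℝ) ≤ 2 * γ / (γ - 1) ^ 2 :=
      div_nonneg (by linarith) (sq_nonneg _)
    exact mul_nonneg h2 dist_nonneg
  · -- main case: |C i| ≥ 2
    have hM : (0:ℝ) < ((C i).card : ℝ) - 1 := by
      have : (2:ℝ) ≤ ((C i).card : ℝ) := by exact_mod_cast hm
      linarith
    have hmR : (0:ℝ) < ((C i).card : ℝ) := by linarith
    have hP : (0:ℝ) < ((C j).card : ℝ) := by exact_mod_cast hp1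
    set d := dist x y with hd
    set Sx := ∑ z ∈ C i, dist x z with hSxdef
    set Sx' := ∑ z ∈ C i, dist x' z with hSx'def
    set Sy := ∑ z ∈ C i, dist y z with hSydef
    set Tx := ∑ z ∈ C j, dist x z with hTxdef
    set Tx' := ∑ z ∈ C j, dist x' z with hTx'def
    set Ty := ∑ z ∈ C j, dist y z with hTydef
    have hSxnn : 0 ≤ Sx := Finset.sum_nonneg fun _ _ => dist_nonneg
    have hSx'nn : 0 ≤ Sx' := Finset.sum_nonneg fun _ _ => dist_nonneg
    have hTynn : 0 ≤ Ty := Finset.sum_nonneg fun _ _ => dist_nonneg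
    have hdnn : 0 ≤ d := dist_nonneg
    set A := Sx / (((C i).card : ℝ) - 1) with hAdef
    set A' := Sx' / (((C i).card : ℝ) - 1) with hA'def
    set B := avgD y (C j) with hBdef
    have hAnn : 0 ≤ A := div_nonneg hSxnn (le_of_lt hM)
    have hA'nn : 0 ≤ A' := div_nonneg hSx'nn (le_of_lt hM)
    have hSxA : Sx = A * (((C i).card : ℝ) - 1) := by
      rw [hAdef, div_mul_cancel₀ _ (ne_of_gt hM)]
    have hSx'A : Sx' = A' * (((C i).card : ℝ) - 1) := by
      rw [hA'def, div_mul_cancel₀ _ (ne_of_gt hM)]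
    -- avgD rewrites
    have eAx : avgD x (C i) = A := by rw [avgD, if_pos hxi]
    have eAx' : avgD x' (C i) = A' := by rw [avgD, if_pos hx'i]
    have eXj : avgD x (C j) = Tx / ((C j).card : ℝ) := by rw [avgD, if_neg hxj]
    have eX'j : avgD x' (C j) = Tx' / ((C j).card : ℝ) := by rw [avgD, if_neg hx'j]
    have eYi : avgD y (C i) = Sy / ((C i).card : ℝ) := by rw [avgD, if_neg hyi]
    -- Ty ≤ p * B
    have hTyB : Ty ≤ ((C j).card : ℝ) * B := by
      rcases Nat.lt_or_ge (C j).card 2 with hp | hp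
      · have hcard : (C j).card = 1 := by omega
        obtain ⟨z, hz⟩ := Finset.card_eq_one.mp hcard
        have hzy : z = y := by
          have := hyj; rw [hz, Finset.mem_singleton] at this; exact this.symm
        have hTy0 : Ty = 0 := by
          rw [hTydef, hz, hzy, Finset.sum_singleton, dist_self]
        have hB0 : B = 0 := by
          rw [hBdef, avgD, if_pos hyj, hz, hzy]
          simp
        rw [hTy0, hB0]; simp
      · have hP1 : (0:ℝ) < ((C j).card : ℝ) - 1 := by
          have : (2:ℝ) ≤ ((C j).card : ℝ) := by exact_mod_cast hp
          linarith
        have hB : B = Ty / (((C j).card : ℝ) - 1) := by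
          rw [hBdef, avgD, if_pos hyj]
        rw [hB, ← mul_div_assoc, le_div_iff₀ hP1]
        nlinarith [hTynn]
    have hBnn : 0 ≤ B := by nlinarith [hTyB, hTynn, hP]
    -- γB ≤ avgD y (C i)
    have h_y : γ * B ≤ Sy / ((C i).card : ℝ) := by
      rw [← eYi, hBdef]; exact hsep j i hij.symm y hyj
    -- triangle sum inequalities
    have hTx : Tx ≤ ((C j).card : ℝ) * d + Ty := by
      have h := Finset.sum_le_sum (fun z (_ : z ∈ C j) => dist_triangle x y z)
      rw [Finset.sum_add_distrib, Finset.sum_const, nsmul_eq_mul] at h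
      exact h
    have hSy : Sy ≤ ((C i).card : ℝ) * d + Sx := by
      have h := Finset.sum_le_sum (fun z (_ : z ∈ C i) => dist_triangle y x z)
      rw [Finset.sum_add_distrib, Finset.sum_const, nsmul_eq_mul, dist_comm y x] at h
      exact h
    have hTx' : Tx' ≤ ((C j).card : ℝ) * dist x' y + Ty := by
      have h := Finset.sum_le_sum (fun z (_ : z ∈ C j) => dist_triangle x' y z)
      rw [Finset.sum_add_distrib, Finset.sum_const, nsmul_eq_mul] at h
      exact h
    have hxx' : ((C i).card : ℝ) * dist x x' ≤ Sx + Sx' := by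
      have h := Finset.sum_le_sum (fun z (_ : z ∈ C i) => dist_triangle_right x x' z)
      rw [Finset.sum_add_distrib, Finset.sum_const, nsmul_eq_mul] at h
      simpa using h
    have hdx'y : dist x' y ≤ dist x x' + d := by
      have := dist_triangle x' x y
      rw [dist_comm x' x] at this; linarith
    clear_value d Sx Sx' Sy Tx Tx' Ty A A' B
    -- clean inequalities
    have h4 : dist x x' ≤ A + A' := by
      have key : ((C i).card : ℝ) * dist x x' ≤ ((C i).card : ℝ) * (A + A') := by
        calc ((C i).card : ℝ) * dist x x' ≤ Sx + Sx' := hxx'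
          _ = (A + A') * (((C i).card : ℝ) - 1) := by rw [hSxA, hSx'A]; ring
          _ ≤ (A + A') * ((C i).card : ℝ) := by
              exact mul_le_mul_of_nonneg_left (by linarith) (by linarith)
          _ = ((C i).card : ℝ) * (A + A') := by ring
      exact le_of_mul_le_mul_left key hmR
    have h1 : γ * A ≤ d + B := by
      have hx1 : γ * A ≤ Tx / ((C j).card : ℝ) := by
        rw [← eAx, ← eXj]; exact hsep i j hij x hxi
      have hx2 : Tx / ((C j).card : ℝ) ≤ d + B := by
        rw [div_le_iff₀ hP]; nlinarith [hTx, hTyB]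
      linarith
    have h2 : γ * B ≤ d + A := by
      have hy2 : Sy / ((C i).card : ℝ) ≤ d + A := by
        rw [div_le_iff₀ hmR]
        nlinarith [hSy, hSxA, hAnn, hM]
      linarith
    have h3 : γ * A' ≤ A + A' + d + B := by
      have hx1 : γ * A' ≤ Tx' / ((C j).card : ℝ) := by
        rw [← eAx', ← eX'j]; exact hsep i j hij x' hx'i
      have hx2 : Tx' / ((C j).card : ℝ) ≤ A + A' + d + B := by
        rw [div_le_iff₀ hP]
        have hdb : dist x' y ≤ A + A' + d := by linarith [hdx'y, h4]
        nlinarith [hTx', hTyB, hdb, hP]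
      linarith
    clear h_y hTyB hTx hSy hTx' hxx' hdx'y eAx eAx' eXj eX'j eYi hSxA hSx'A
    clear hSxnn hSx'nn hTynn hAdef hA'def hBdef hSxdef hSx'def hSydef hTxdef hTx'def hTydef
    clear hsep hsize hcover hne hdisj hd
    clear Sx Sx' Sy Tx Tx' Ty
    -- combine
    have hAd : (γ - 1) * A ≤ d := by
      have h1g := mul_le_mul_of_nonneg_left h1 (le_of_lt hγ0)
      nlinarith [h1g, h2, hAnn, hγ1, hγ0]
    have hA'2 : γ * ((γ - 1) * A') ≤ (γ + 1) * (A + d) := by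
      have h3g := mul_le_mul_of_nonneg_left h3 (le_of_lt hγ0)
      nlinarith [h3g, h2]
    rw [div_mul_eq_mul_div, le_div_iff₀ (by positivity : (0:ℝ) < (γ - 1) ^ 2)]
    have T1 := mul_le_mul_of_nonneg_left hAd (mul_nonneg (le_of_lt hγ0) (le_of_lt hγ1))
    have T2 := mul_le_mul_of_nonneg_left hA'2 (le_of_lt hγ1)
    have T3 := mul_le_mul_of_nonneg_left hAd (by linarith : (0:ℝ) ≤ γ + 1)
    have T4 := mul_le_mul_of_nonneg_left h4 (sq_nonneg (γ - 1))
    have Hγ : γ * (dist x x' * (γ - 1) ^ 2) ≤ γ * (2 * γ * d) := by nlinarith [T1, T2, T3, T4]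
    exact le_of_mul_le_mul_left (by linarith [Hγ]) hγ0
end

section
/- Let x_1 ≤ … ≤ x_i be points on the real line with Euclidean distance, let l ≥ 2 and 1 ≤ j ≤ i−l+1, and let (C_1,…,C_l) be an l-clustering of {x_1,…,x_i} with nonempty contiguous clusters whose last cluster is C_l = {x_{i−j+1},…,x_i}. Then (C_1,…,C_l) is IP-stable if and only if the following three conditions hold: (i) (C_1,…,C_{l−1}) is an IP-stable (l−1)-clustering of {x_1,…,x_{i−j}}; (ii) the average distance of x_{i−j} to the other points of C_{l−1} is at most its average distance to the points of C_l; and (iii) the average distance of x_{i−j+1} to the other points of C_l is at most its average distance to the points of C_{l−1}. -/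
open Finset

open Finset

lemma abs_neg_sub_neg' (a b : ℝ) : |(-a) - (-b)| = |a - b| := by
  rw [neg_sub_neg, abs_sub_comm]

section aux
variable {α : Type*} [DecidableEq α] (f : α → ℝ)

lemma sum_abs_left {F : Finset α} {c : ℝ} (h : ∀ y ∈ F, f y ≤ c) :
    ∑ y ∈ F, |c - f y| = F.card * c - ∑ y ∈ F, f y := by
  rw [Finset.sum_congr rfl (fun y hy => abs_of_nonneg (by linarith [h y hy])),
    Finset.sum_sub_distrib, Finset.sum_const, nsmul_eq_mul]

lemma avg_mono (F G : Finset α) (hF : F.Nonempty) (hG : G.Nonempty) (c : ℝ)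
    (hFG : ∀ y ∈ F, ∀ z ∈ G, f y ≤ f z) (hGc : ∀ z ∈ G, f z ≤ c) :
    (∑ z ∈ G, |c - f z|) / (G.card : ℝ) ≤ (∑ y ∈ F, |c - f y|) / (F.card : ℝ) := by
  obtain ⟨z₀, hz₀⟩ := hG
  have hFc : ∀ y ∈ F, f y ≤ c := fun y hy => (hFG y hy z₀ hz₀).trans (hGc z₀ hz₀)
  have hFpos : (0:ℝ) < F.card := by
    exact_mod_cast Finset.card_pos.2 hF
  have hGpos : (0:ℝ) < G.card := by
    exact_mod_cast Finset.card_pos.2 ⟨z₀, hz₀⟩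
  have key : (G.card:ℝ) * ∑ y ∈ F, f y ≤ (F.card:ℝ) * ∑ z ∈ G, f z := by
    have h1 : ∑ y ∈ F, ∑ _z ∈ G, f y ≤ ∑ y ∈ F, ∑ z ∈ G, f z :=
      Finset.sum_le_sum fun y hy => Finset.sum_le_sum fun z hz => hFG y hy z hz
    have h2 : ∑ y ∈ F, ∑ _z ∈ G, f y = (G.card:ℝ) * ∑ y ∈ F, f y := by
      simp [Finset.sum_const, Finset.sum_mul, Finset.mul_sum, mul_comm]
    have h3 : ∑ _y ∈ F, ∑ z ∈ G, f z = (F.card:ℝ) * ∑ z ∈ G, f z := by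
      simp [Finset.sum_const]
    rw [h2] at h1; rwa [h3] at h1
  rw [sum_abs_left f hGc, sum_abs_left f hFc, div_le_div_iff₀ hGpos hFpos]
  nlinarith [key]

lemma avg_mono' (F G : Finset α) (hF : F.Nonempty) (hG : G.Nonempty) (c : ℝ)
    (hFG : ∀ y ∈ F, ∀ z ∈ G, f z ≤ f y) (hGc : ∀ z ∈ G, c ≤ f z) :
    (∑ z ∈ G, |c - f z|) / (G.card : ℝ) ≤ (∑ y ∈ F, |c - f y|) / (F.card : ℝ) := by
  have := avg_mono (fun t => -(f t)) F G hF hG (-c)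
    (fun y hy z hz => neg_le_neg (hFG y hy z hz))
    (fun z hz => neg_le_neg (hGc z hz))
  simpa only [abs_neg_sub_neg'] using this

lemma sum_abs_shift (F : Finset α) (u p : α) (hu : u ∈ F) (hp : p ∈ F) (hne : u ≠ p)
    (hmin : ∀ y ∈ F, f u ≤ f y) :
    ∑ y ∈ F, |f p - f y| ≤ (∑ y ∈ F, |f u - f y|) + ((F.card:ℝ) - 2) * (f p - f u) := by
  have hup : f u ≤ f p := hmin p hp
  have hcard : 1 ≤ F.card := Finset.card_pos.2 ⟨p, hp⟩
  have h1 : ∀ y ∈ F.erase p, |f p - f y| ≤ |f u - f y| + (f p - f u) := by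
    intro y hy
    have huy : f u ≤ f y := hmin y (Finset.mem_of_mem_erase hy)
    rcases le_total (f y) (f p) with h | h
    · rw [abs_of_nonneg (by linarith), abs_of_nonpos (by linarith : f u - f y ≤ 0)]
      linarith
    · rw [abs_of_nonpos (by linarith : f p - f y ≤ 0),
        abs_of_nonpos (by linarith : f u - f y ≤ 0)]
      linarith
  have e1 : ∑ y ∈ F, |f p - f y| = ∑ y ∈ F.erase p, |f p - f y| := by
    rw [← Finset.add_sum_erase F _ hp]
    simp
  have e2 : ∑ y ∈ F.erase p, |f u - f y| = (∑ y ∈ F, |f u - f y|) - (f p - f u) := by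
    rw [← Finset.add_sum_erase F _ hp, abs_of_nonpos (by linarith : f u - f p ≤ 0)]
    ring
  have e3 : ∑ y ∈ F.erase p, |f p - f y| ≤
      ∑ y ∈ F.erase p, (|f u - f y| + (f p - f u)) := Finset.sum_le_sum h1
  have e4 : ∑ y ∈ F.erase p, (|f u - f y| + (f p - f u)) =
      (∑ y ∈ F.erase p, |f u - f y|) + ((F.card:ℝ) - 1) * (f p - f u) := by
    rw [Finset.sum_add_distrib, Finset.sum_const, nsmul_eq_mul,
      Finset.card_erase_of_mem hp]
    have : ((F.card - 1 : ℕ) : ℝ) = (F.card : ℝ) - 1 := by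
      have := hcard; push_cast [Nat.cast_sub hcard]; ring
    rw [this]
  rw [e1]
  rw [e2] at e4
  calc ∑ y ∈ F.erase p, |f p - f y| ≤ _ := e3
    _ = (∑ y ∈ F, |f u - f y|) - (f p - f u) + ((F.card:ℝ) - 1) * (f p - f u) := e4
    _ = (∑ y ∈ F, |f u - f y|) + ((F.card:ℝ) - 2) * (f p - f u) := by ring

lemma extend_stability (F G : Finset α) (hG : G.Nonempty) (u : α) (hu : u ∈ F)
    (hmin : ∀ y ∈ F, f u ≤ f y) (hGu : ∀ z ∈ G, f z ≤ f u)
    (H : (∑ y ∈ F, |f u - f y|) / ((F.card:ℝ) - 1) ≤ (∑ z ∈ G, |f u - f z|) / (G.card : ℝ))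
    (p : α) (hp : p ∈ F) :
    (∑ y ∈ F, |f p - f y|) / ((F.card:ℝ) - 1) ≤ (∑ z ∈ G, |f p - f z|) / (G.card : ℝ) := by
  rcases eq_or_ne p u with rfl | hne
  · exact H
  have hGpos : (0:ℝ) < G.card := by exact_mod_cast Finset.card_pos.2 hG
  have hup : f u ≤ f p := hmin p hp
  set δ : ℝ := f p - f u with hδ
  have hδ0 : 0 ≤ δ := by rw [hδ]; linarith
  have hcard2 : 2 ≤ F.card := by
    have : ({u, p} : Finset α) ⊆ F := by
      intro t ht; simp at ht; rcases ht with rfl | rfl <;> assumption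
    calc 2 = ({u, p} : Finset α).card := by rw [Finset.card_insert_of_notMem (by simpa using hne.symm), Finset.card_singleton]
      _ ≤ F.card := Finset.card_le_card this
  have hn2 : (2:ℝ) ≤ (F.card : ℝ) := by exact_mod_cast hcard2
  have hn1 : (0:ℝ) < (F.card : ℝ) - 1 := by linarith
  -- right side shift
  have hRG : ∑ z ∈ G, |f p - f z| = (∑ z ∈ G, |f u - f z|) + G.card * δ := by
    rw [Finset.sum_congr rfl (fun z hz => show |f p - f z| = |f u - f z| + δ by
      rw [abs_of_nonneg (by linarith [hGu z hz]), abs_of_nonneg (by linarith [hGu z hz]), hδ]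
      ring)]
    rw [Finset.sum_add_distrib, Finset.sum_const, nsmul_eq_mul]
  have hshift := sum_abs_shift f F u p hu hp hne.symm hmin
  have step : (∑ y ∈ F, |f p - f y|) / ((F.card:ℝ) - 1) ≤
      (∑ y ∈ F, |f u - f y|) / ((F.card:ℝ) - 1) + δ := by
    have e1 : (∑ y ∈ F, |f p - f y|) / ((F.card:ℝ) - 1) ≤
        ((∑ y ∈ F, |f u - f y|) + ((F.card:ℝ) - 2) * δ) / ((F.card:ℝ) - 1) := by
      gcongr
    have e2 : ((∑ y ∈ F, |f u - f y|) + ((F.card:ℝ) - 2) * δ) / ((F.card:ℝ) - 1) =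
        (∑ y ∈ F, |f u - f y|) / ((F.card:ℝ) - 1) + (((F.card:ℝ) - 2) / ((F.card:ℝ) - 1)) * δ := by
      field_simp
    have e3 : (((F.card:ℝ) - 2) / ((F.card:ℝ) - 1)) * δ ≤ δ := by
      have : ((F.card:ℝ) - 2) / ((F.card:ℝ) - 1) ≤ 1 := by
        rw [div_le_one hn1]; linarith
      nlinarith
    calc (∑ y ∈ F, |f p - f y|) / ((F.card:ℝ) - 1) ≤ _ := e1
      _ = _ := e2
      _ ≤ _ := by linarith
  have hRG' : (∑ z ∈ G, |f p - f z|) / (G.card : ℝ) =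
      (∑ z ∈ G, |f u - f z|) / (G.card : ℝ) + δ := by
    rw [hRG, add_div, mul_div_cancel_left₀ δ (ne_of_gt hGpos)]
  rw [hRG']
  linarith

lemma extend_stability' (F G : Finset α) (hG : G.Nonempty) (v : α) (hv : v ∈ F)
    (hmax : ∀ y ∈ F, f y ≤ f v) (hGv : ∀ z ∈ G, f v ≤ f z)
    (H : (∑ y ∈ F, |f v - f y|) / ((F.card:ℝ) - 1) ≤ (∑ z ∈ G, |f v - f z|) / (G.card : ℝ))
    (p : α) (hp : p ∈ F) :
    (∑ y ∈ F, |f p - f y|) / ((F.card:ℝ) - 1) ≤ (∑ z ∈ G, |f p - f z|) / (G.card : ℝ) := by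
  have := extend_stability (fun t => -(f t)) F G hG v hv
    (fun y hy => neg_le_neg (hmax y hy)) (fun z hz => neg_le_neg (hGv z hz))
    (by simpa only [abs_neg_sub_neg'] using H) p hp
  simpa only [abs_neg_sub_neg'] using this

end aux


set_option maxHeartbeats 2000000 in
/-- correctness of the DP recurrence on the line: let
`x_0 ≤ … ≤ x_{N-1}` be points on the real line, `l ≥ 2`, `1 ≤ j ≤ N - l + 1`,
and let `C` be an `l`-clustering of the `N` points into nonempty contiguous
clusters (given by boundary positions `b 0 = 0 < b 1 < ⋯ < b l = N`) whose last
cluster consists of the last `j` points (`b (l-1) = N - j`). Then `C` is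
IP-stable iff (i) the first `l - 1` clusters form an IP-stable
`(l-1)`-clustering of the first `N - j` points, (ii) the average distance of
`x_{N-j-1}` to the other points of its own cluster is at most its average
distance to the last cluster, and (iii) the average distance of `x_{N-j}` to
the other points of the last cluster is at most its average distance to the
second-to-last cluster. -/
theorem dp_recurrence_correctness_on_line
    (N l j : ℕ) (hl : 2 ≤ l) (hj1 : 1 ≤ j) (hj2 : j + l ≤ N + 1)
    (x : Fin N → ℝ) (hx : Monotone x)
    (b : Fin (l + 1) → ℕ) (hb : StrictMono b)
    (hb0 : b 0 = 0) (hbl : b (Fin.last l) = N)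
    (hbl1 : ∀ h : l - 1 < l + 1, b ⟨l - 1, h⟩ = N - j)
    (C : Fin l → Finset (Fin N))
    (hC : ∀ (m : Fin l) (p : Fin N),
      p ∈ C m ↔ b m.castSucc ≤ (p : ℕ) ∧ (p : ℕ) < b m.succ) :
    (∀ p : Fin N, IPStablePt (fun p q => |x p - x q|) C p) ↔
      ((∀ p : Fin N, (p : ℕ) < N - j →
          IPStablePt (fun p q => |x p - x q|)
            (fun m : Fin (l - 1) => C (Fin.castLE (Nat.sub_le l 1) m)) p) ∧
        ((∑ y ∈ C ⟨l - 2, by omega⟩, |x ⟨N - j - 1, by omega⟩ - x y|) /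
            ((C ⟨l - 2, by omega⟩).card - 1 : ℝ) ≤
          (∑ y ∈ C ⟨l - 1, by omega⟩, |x ⟨N - j - 1, by omega⟩ - x y|) /
            ((C ⟨l - 1, by omega⟩).card : ℝ)) ∧
        ((∑ y ∈ C ⟨l - 1, by omega⟩, |x ⟨N - j, by omega⟩ - x y|) /
            ((C ⟨l - 1, by omega⟩).card - 1 : ℝ) ≤
          (∑ y ∈ C ⟨l - 2, by omega⟩, |x ⟨N - j, by omega⟩ - x y|) /
            ((C ⟨l - 2, by omega⟩).card : ℝ))) := by
    classical
  -- basic numeric facts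
  have hNj1 : 1 ≤ N - j := by omega
  have hjN : j ≤ N := by omega
  -- unique membership
  have key : ∀ (m m' : Fin l) (p : Fin N), p ∈ C m → p ∈ C m' → ¬ m < m' := by
    intro m m' p hm hm' hlt
    rw [hC] at hm hm'
    have hmono : b m.succ ≤ b m'.castSucc := by
      apply hb.monotone
      rw [Fin.le_def]
      simp only [Fin.val_succ, Fin.coe_castSucc]
      exact Fin.lt_def.mp hlt
    omega
  have mem_unique : ∀ (m m' : Fin l) (p : Fin N), p ∈ C m → p ∈ C m' → m = m' := by
    intro m m' p hm hm'
    by_contra hne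
    rcases Ne.lt_or_gt hne with h | h
    · exact key m m' p hm hm' h
    · exact key m' m p hm' hm h
  have mem_exists : ∀ p : Fin N, ∃ m : Fin l, p ∈ C m := by
    intro p
    have main : ∀ k : ℕ, (hk : k ≤ l) → (p:ℕ) < b ⟨k, by omega⟩ → ∃ m : Fin l, p ∈ C m := by
      intro k
      induction k with
      | zero =>
        intro _ h
        rw [show (⟨0, by omega⟩ : Fin (l+1)) = 0 from rfl, hb0] at h
        omega
      | succ n ih =>
        intro hk hlt
        by_cases hcase : b ⟨n, by omega⟩ ≤ (p:ℕ)
        · refine ⟨⟨n, by omega⟩, (hC _ _).2 ⟨hcase, hlt⟩⟩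
        · exact ih (by omega) (Nat.lt_of_not_le hcase)
    have hplt : (p:ℕ) < b ⟨l, by omega⟩ := by
      rw [show (⟨l, by omega⟩ : Fin (l+1)) = Fin.last l from rfl, hbl]
      exact p.isLt
    exact main l le_rfl hplt
  have mem_nonempty : ∀ m : Fin l, (C m).Nonempty := by
    intro m
    have h1 : b m.castSucc < b m.succ := hb (by rw [Fin.lt_def]; simp)
    have h2 : b m.succ ≤ N := by rw [← hbl]; exact hb.monotone (Fin.le_last _)
    exact ⟨⟨b m.castSucc, by omega⟩, (hC _ _).2 ⟨le_rfl, by exact h1⟩⟩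
  have hCne : ∀ m m' : Fin l, m ≠ m' → C m ≠ C m' := by
    intro m m' h heq
    obtain ⟨p, hp⟩ := mem_nonempty m
    exact h (mem_unique m m' p hp (heq ▸ hp))
  -- distinguished indices
  have hl1 : l - 1 < l := by omega
  have hl2 : l - 2 < l := by omega
  set L : Fin l := ⟨l - 1, hl1⟩ with hLdef
  set S : Fin l := ⟨l - 2, hl2⟩ with hSdef
  have hbL1 : b L.castSucc = N - j := hbl1 _
  have hbL2 : b L.succ = N := by
    rw [← hbl]; congr 1; apply Fin.ext; simp [hLdef]; omega
  have hbS2 : b S.succ = N - j := by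
    have h := hbl1 (by omega)
    rw [← h]; congr 1; apply Fin.ext; simp [hSdef]; omega
  have memL : ∀ p : Fin N, p ∈ C L ↔ N - j ≤ (p:ℕ) := by
    intro p
    rw [hC, hbL1, hbL2]
    exact ⟨fun h => h.1, fun h => ⟨h, p.isLt⟩⟩
  have memS : ∀ p : Fin N, p ∈ C S → (p:ℕ) < N - j := by
    intro p hp
    rw [hC, hbS2] at hp
    exact hp.2
  -- upper bound for earlier clusters
  have upper : ∀ (m : Fin l) (p : Fin N), p ∈ C m → (m:ℕ) < l - 1 → (p:ℕ) < N - j := by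
    intro m p hp hm
    rw [hC] at hp
    have hmono : b m.succ ≤ b L.castSucc := by
      apply hb.monotone
      rw [Fin.le_def]
      simp only [Fin.val_succ, Fin.coe_castSucc, hLdef]
      omega
    omega
  have xle : ∀ (m m' : Fin l) (p q : Fin N), p ∈ C m → q ∈ C m' → (m:ℕ) < (m':ℕ) → x p ≤ x q := by
    intro m m' p q hp hq hlt
    rw [hC] at hp hq
    have hmono : b m.succ ≤ b m'.castSucc := by
      apply hb.monotone
      rw [Fin.le_def]
      simp only [Fin.val_succ, Fin.coe_castSucc]
      omega
    exact hx (show p ≤ q by rw [Fin.le_def]; omega)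
  -- distinguished points
  set v : Fin N := ⟨N - j - 1, by omega⟩ with hvdef
  set u : Fin N := ⟨N - j, by omega⟩ with hudef
  have hv : v ∈ C S := by
    rw [hC, hbS2]
    have h1 : b S.castSucc < b S.succ := hb (by rw [Fin.lt_def]; simp)
    rw [hbS2] at h1
    constructor
    · simp only [hvdef]; omega
    · simp only [hvdef]; omega
  have hu : u ∈ C L := (memL u).2 (by simp [hudef])
  have hu_min : ∀ y ∈ C L, x u ≤ x y := by
    intro y hy
    exact hx (show u ≤ y by rw [Fin.le_def]; have := (memL y).1 hy; simp [hudef]; omega)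
  have hv_max : ∀ y ∈ C S, x y ≤ x v := by
    intro y hy
    have := memS y hy
    exact hx (show y ≤ v by rw [Fin.le_def]; simp [hvdef]; omega)
  have hS_left_u : ∀ z ∈ C S, x z ≤ x u := by
    intro z hz
    have := memS z hz
    exact hx (show z ≤ u by rw [Fin.le_def]; simp [hudef]; omega)
  have hL_right_v : ∀ z ∈ C L, x v ≤ x z := by
    intro z hz
    have := (memL z).1 hz
    exact hx (show v ≤ z by rw [Fin.le_def]; simp [hvdef]; omega)
  have hLS : L ≠ S := by
    simp only [hLdef, hSdef, ne_eq, Fin.mk.injEq]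
    omega
  constructor
  · -- forward direction
    intro h
    refine ⟨?_, ?_, ?_⟩
    · -- (i)
      intro p _hp i hi
      rcases h p (Fin.castLE (Nat.sub_le l 1) i) hi with h1 | h2
      · exact Or.inl h1
      · exact Or.inr fun j' hj' => h2 (Fin.castLE (Nat.sub_le l 1) j') hj'
    · -- (ii)
      rcases h v S hv with hsing | hineq
      · show (∑ y ∈ C S, |x v - x y|) / ((C S).card - 1 : ℝ) ≤
            (∑ y ∈ C L, |x v - x y|) / ((C L).card : ℝ)
        rw [hsing]
        simp only [Finset.sum_singleton, sub_self, abs_zero, Finset.card_singleton]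
        norm_num
        positivity
      · exact hineq L (hCne L S hLS)
    · -- (iii)
      rcases h u L hu with hsing | hineq
      · show (∑ y ∈ C L, |x u - x y|) / ((C L).card - 1 : ℝ) ≤
            (∑ y ∈ C S, |x u - x y|) / ((C S).card : ℝ)
        rw [hsing]
        simp only [Finset.sum_singleton, sub_self, abs_zero, Finset.card_singleton]
        norm_num
        positivity
      · exact hineq S (hCne S L hLS.symm)
  · -- backward direction
    rintro ⟨h1, h2, h3⟩ p i hi
    have h2' : (∑ y ∈ C S, |x v - x y|) / ((C S).card - 1 : ℝ) ≤
        (∑ z ∈ C L, |x v - x z|) / ((C L).card : ℝ) := h2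
    have h3' : (∑ y ∈ C L, |x u - x y|) / ((C L).card - 1 : ℝ) ≤
        (∑ z ∈ C S, |x u - x z|) / ((C S).card : ℝ) := h3
    by_cases hiL : (i:ℕ) = l - 1
    · -- p is in the last cluster
      have hiL' : i = L := Fin.ext hiL
      subst hiL'
      right
      intro j' hj'
      have hj'ne : j' ≠ L := fun hh => hj' (by rw [hh])
      have hj'lt : (j':ℕ) < l - 1 := by
        have h4 := j'.isLt
        have h5 : (j':ℕ) ≠ l - 1 := fun hh => hj'ne (Fin.ext hh)
        omega
      have step1 : (∑ y ∈ C L, |x p - x y|) / ((C L).card - 1 : ℝ) ≤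
          (∑ z ∈ C S, |x p - x z|) / ((C S).card : ℝ) :=
        extend_stability x (C L) (C S) (mem_nonempty S) u hu hu_min hS_left_u h3' p hi
      rcases eq_or_ne j' S with rfl | hj'S
      · exact step1
      · have hj'S' : (j':ℕ) < l - 2 := by
          have h5 : (j':ℕ) ≠ l - 2 := fun hh => hj'S (Fin.ext hh)
          omega
        have step2 : (∑ z ∈ C S, |x p - x z|) / ((C S).card : ℝ) ≤
            (∑ y ∈ C j', |x p - x y|) / ((C j').card : ℝ) := by
          apply avg_mono x (C j') (C S) (mem_nonempty j') (mem_nonempty S) (x p)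
          · intro y hy z hz
            exact xle j' S y z hy hz (by simp [hSdef]; omega)
          · intro z hz
            exact xle S L z p hz hi (by simp [hSdef, hLdef]; omega)
        exact step1.trans step2
    · -- p is in an earlier cluster
      have hilt : (i:ℕ) < l - 1 := by have := i.isLt; omega
      have hpNj : (p:ℕ) < N - j := upper i p hi hilt
      have hsub := h1 p hpNj ⟨(i:ℕ), by omega⟩ hi
      rcases hsub with hsing | hineq
      · exact Or.inl hsing
      · right
        intro j' hj'
        by_cases hj'L : (j':ℕ) = l - 1
        · have hj'L' : j' = L := Fin.ext hj'L
          subst hj'L'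
          by_cases hiS : (i:ℕ) = l - 2
          · have hiS' : i = S := Fin.ext hiS
            subst hiS'
            exact extend_stability' x (C S) (C L) (mem_nonempty L) v hv hv_max hL_right_v h2' p hi
          · have hiS' : (i:ℕ) < l - 2 := by omega
            have hSi : C (Fin.castLE (Nat.sub_le l 1) ⟨l - 2, by omega⟩) ≠
                C (Fin.castLE (Nat.sub_le l 1) ⟨(i:ℕ), by omega⟩) := by
              have : C S ≠ C i := hCne S i (by
                simp only [hSdef, ne_eq, Fin.ext_iff]
                omega)
              exact this
            have hineq_S := hineq ⟨l - 2, by omega⟩ hSi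
            have hineq_S' : (∑ y ∈ C i, |x p - x y|) / ((C i).card - 1 : ℝ) ≤
                (∑ z ∈ C S, |x p - x z|) / ((C S).card : ℝ) := hineq_S
            have step2 : (∑ z ∈ C S, |x p - x z|) / ((C S).card : ℝ) ≤
                (∑ y ∈ C L, |x p - x y|) / ((C L).card : ℝ) := by
              apply avg_mono' x (C L) (C S) (mem_nonempty L) (mem_nonempty S) (x p)
              · intro y hy z hz
                exact xle S L z y hz hy (by simp [hSdef, hLdef]; omega)
              · intro z hz
                exact xle i S p z hi hz (by simp [hSdef]; omega)
            exact hineq_S'.trans step2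
        · have hj'lt2 : (j':ℕ) < l - 1 := by have := j'.isLt; omega
          have hCcond : C (Fin.castLE (Nat.sub_le l 1) ⟨(j':ℕ), by omega⟩) ≠
              C (Fin.castLE (Nat.sub_le l 1) ⟨(i:ℕ), by omega⟩) := hj'
          exact hineq ⟨(j':ℕ), by omega⟩ hCcond
end

section
/- Fix n ≥ 3 and consider the n points on the real line v_1 = −1 and v_i = (i−2)/2 for i = 2,…,n, with the Euclidean distance. In the 2-clustering with clusters C_1 = {v_1} and C_2 = {v_2,…,v_n}, the point v_2 has average distance (n−1)/4 to the other points of its own cluster C_2 and average distance 1 to the cluster C_1. Consequently, this 2-clustering is t-approximately IP-stable only for t ≥ (n−1)/4; in particular, for any α > 1, taking n > 4α+1 yields a finite metric instance and a 2-clustering (the output of single-linkage clustering on this instance) whose IP-stability violation is at least α. -/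
open Finset

/-- A point (here: an index) `x` is `t`-approximately IP-stable in the
clustering `C` w.r.t. dissimilarity `d`. -/
def IPApproxStablePt {α : Type*} [DecidableEq α] (t : ℝ) (d : α → α → ℝ) {k : ℕ}
    (C : Fin k → Finset α) (x : α) : Prop :=
  ∀ i : Fin k, x ∈ C i →
    (C i = {x} ∨
      ∀ j : Fin k, C j ≠ C i →
        (∑ y ∈ C i, d x y) / ((C i).card - 1 : ℝ) ≤
          t * ((∑ y ∈ C j, d x y) / ((C j).card : ℝ)))

lemma fin_gauss (n : ℕ) (hn : 1 ≤ n) :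
    ∑ i : Fin n, ((i : ℕ) : ℝ) = (n : ℝ) * ((n : ℝ) - 1) / 2 := by
  rw [Fin.sum_univ_eq_sum_range]
  have hc : ((∑ i ∈ Finset.range n, i : ℕ) : ℝ) = ∑ i ∈ Finset.range n, ((i:ℕ):ℝ) := by
    push_cast; ring
  rw [← hc]
  have h2 : ((∑ i ∈ Finset.range n, i) * 2 : ℕ) = (n * (n-1) : ℕ) :=
    Finset.sum_range_id_mul_two n
  have h3 : ((∑ i ∈ Finset.range n, i : ℕ) : ℝ) * 2 = (n:ℝ) * ((n:ℝ)-1) := by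
    have := congrArg (Nat.cast : ℕ → ℝ) h2
    push_cast [Nat.cast_sub hn] at this
    linarith
  linarith

/-- hard instance for single linkage: for `n ≥ 3` points on the
line with `v 0 = -1` and `v i = ((i+1) - 2)/2` for `i ≠ 0` (the paper's
`v_1 = -1`, `v_i = (i-2)/2` for `i = 2, …, n`), consider the 2-clustering
`C_1 = {v_1}`, `C_2 = {v_2, …, v_n}`. Then the point `v_2` has average distance
`(n-1)/4` to the other points of its own cluster and average distance `1` to
`C_1`; consequently the clustering is `t`-approximately IP-stable only for
`t ≥ (n-1)/4`, and in particular for any `α > 1`, if `n > 4α + 1` then the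
IP-stability violation is at least `α`. -/
theorem single_linkage_hard_instance
    (n : ℕ) (hn : 3 ≤ n)
    (v : Fin n → ℝ) (hv0 : v ⟨0, by omega⟩ = -1)
    (hvi : ∀ i : Fin n, (i : ℕ) ≠ 0 → v i = (((i : ℕ) : ℝ) - 1) / 2)
    (C : Fin 2 → Finset (Fin n))
    (hC0 : C 0 = {(⟨0, by omega⟩ : Fin n)})
    (hC1 : C 1 = Finset.univ \ {(⟨0, by omega⟩ : Fin n)}) :
    ((∑ y ∈ C 1, |v ⟨1, by omega⟩ - v y|) / (((C 1).card : ℝ) - 1) =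
        ((n : ℝ) - 1) / 4) ∧
    ((∑ y ∈ C 0, |v ⟨1, by omega⟩ - v y|) / ((C 0).card : ℝ) = 1) ∧
    (∀ t : ℝ, 1 ≤ t →
      (∀ p : Fin n, IPApproxStablePt t (fun p q => |v p - v q|) C p) →
      ((n : ℝ) - 1) / 4 ≤ t) ∧
    (∀ α : ℝ, 1 < α → 4 * α + 1 < (n : ℝ) →
      ∀ t : ℝ, 1 ≤ t →
        (∀ p : Fin n, IPApproxStablePt t (fun p q => |v p - v q|) C p) →
        α ≤ t) := by
  set x0 : Fin n := ⟨0, by omega⟩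
  set x1 : Fin n := ⟨1, by omega⟩
  set x2 : Fin n := ⟨2, by omega⟩
  have hx10 : x1 ≠ x0 := by simp [x0, x1, Fin.ext_iff]
  have hx20 : x2 ≠ x0 := by simp [x0, x2, Fin.ext_iff]
  have hx21 : x2 ≠ x1 := by simp [x1, x2, Fin.ext_iff]
  have hv1 : v x1 = 0 := by rw [hvi x1 (by simp [x1])]; simp [x1]
  have hcard1 : (C 1).card = n - 1 := by
    rw [hC1, Finset.card_sdiff_of_subset (by simp)]
    simp
  have hcard1R : ((C 1).card : ℝ) = (n : ℝ) - 1 := by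
    rw [hcard1]; push_cast [Nat.cast_sub (by omega : 1 ≤ n)]; ring
  have hnR : (3:ℝ) ≤ (n:ℝ) := by exact_mod_cast hn
  have hsum1 : (∑ y ∈ C 1, |v x1 - v y|) = ((n:ℝ) - 1) * ((n:ℝ) - 2) / 4 := by
    rw [hC1]
    have hcong : ∑ y ∈ Finset.univ \ {x0}, |v x1 - v y|
        = ∑ y ∈ Finset.univ \ {x0}, (((y : ℕ) : ℝ) - 1) / 2 := by
      apply Finset.sum_congr rfl
      intro y hy
      simp only [Finset.mem_sdiff, Finset.mem_singleton] at hy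
      have hy0 : (y : ℕ) ≠ 0 := fun h => hy.2 (Fin.ext h)
      rw [hvi y hy0, hv1]
      have h1 : (1:ℝ) ≤ ((y:ℕ):ℝ) := by
        exact_mod_cast Nat.one_le_iff_ne_zero.mpr hy0
      rw [abs_of_nonpos (by linarith)]
      ring
    rw [hcong, Finset.sum_sdiff_eq_sub (by simp), Finset.sum_singleton]
    have hg := fin_gauss n (by omega)
    have hsplit : ∑ y : Fin n, (((y:ℕ):ℝ) - 1) / 2
        = (∑ y : Fin n, ((y:ℕ):ℝ)) / 2 - (n:ℝ) / 2 := by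
      simp only [sub_div]
      rw [Finset.sum_sub_distrib, ← Finset.sum_div]
      simp [Finset.card_univ]
      ring
    rw [hsplit, hg]
    simp only [x0]
    push_cast
    ring
  have hsum0 : (∑ y ∈ C 0, |v x1 - v y|) = 1 := by
    rw [hC0, Finset.sum_singleton, hv1, hv0]
    norm_num
  have part1 : (∑ y ∈ C 1, |v x1 - v y|) / (((C 1).card : ℝ) - 1) = ((n:ℝ) - 1) / 4 := by
    rw [hsum1, hcard1R, show ((n:ℝ) - 1) - 1 = (n:ℝ) - 2 by ring,
      div_eq_div_iff (ne_of_gt (by linarith : (0:ℝ) < (n:ℝ) - 2)) (by norm_num : (4:ℝ) ≠ 0)]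
    ring
  have part2 : (∑ y ∈ C 0, |v x1 - v y|) / ((C 0).card : ℝ) = 1 := by
    rw [hsum0, hC0]; simp
  have part3 : ∀ t : ℝ, 1 ≤ t →
      (∀ p : Fin n, IPApproxStablePt t (fun p q => |v p - v q|) C p) →
      ((n : ℝ) - 1) / 4 ≤ t := by
    intro t ht hstab
    have h1 := hstab x1 1 (by rw [hC1]; simp [hx10])
    rcases h1 with h | h
    · exfalso
      have hmem : x2 ∈ C 1 := by rw [hC1]; simp [hx20]
      rw [h] at hmem
      exact hx21 (Finset.mem_singleton.mp hmem)
    · have hne : C 0 ≠ C 1 := by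
        intro he
        have hmem : x2 ∈ C 0 := by rw [he, hC1]; simp [hx20]
        rw [hC0] at hmem
        exact hx20 (Finset.mem_singleton.mp hmem)
      have h2 := h 0 hne
      rw [part2] at h2
      calc ((n:ℝ) - 1) / 4
          = (∑ y ∈ C 1, |v x1 - v y|) / (((C 1).card : ℝ) - 1) := part1.symm
        _ ≤ t * 1 := h2
        _ = t := mul_one t
  refine ⟨part1, part2, part3, ?_⟩
  intro α hα hαn t ht hstab
  have h3 := part3 t ht hstab
  linarith
end
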